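/- arXiv:0908.3411 — 7 statements merged into one kernel-verified Lean document; each statement's English description precedes it below -/
import Mathlib

section
/- For every sufficiently small d₀ ∈ (0,1), every ε > 0 sufficiently small in terms of d₀, and every real K ≥ 1, there exists an integer m₀ = m₀(ε, d₀, K) such that for all d ≥ d₀ the following holds: if G is a bipartite graph with vertex classes A and B of size |A| = |B| = m ≥ m₀ which is ε-regular of density d, then G contains ⌊K⌋ pairwise edge-disjoint spanning subgraphs S₁, …, S_⌊K⌋ such that each S_i is [ε, 4ε/K]-regular and has density in the interval [(d − 2ε)/K, (d + 2ε)/K]. -/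
open scoped Classical

/-- Number of edges of a bipartite graph `E ⊆ α × β` between `X ⊆ α` and `Y ⊆ β`. -/
noncomputable def eBip {α β : Type*} (E : Finset (α × β)) (X : Finset α) (Y : Finset β) : ℕ :=
  (E.filter fun e => e.1 ∈ X ∧ e.2 ∈ Y).card

/-- Density of a bipartite graph between `X` and `Y`. -/
noncomputable def densBip {α β : Type*} (E : Finset (α × β)) (X : Finset α) (Y : Finset β) : ℝ :=
  (eBip E X Y : ℝ) / ((X.card : ℝ) * (Y.card : ℝ))

/-- `E` (with vertex classes the whole of `α` and `β`) is `[ε,ε']`-regular. -/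
def IsRegularBip {α β : Type*} [Fintype α] [Fintype β] (E : Finset (α × β))
    (ε ε' : ℝ) : Prop :=
  ∀ X : Finset α, ∀ Y : Finset β,
    ε * (Fintype.card α : ℝ) ≤ (X.card : ℝ) → ε * (Fintype.card β : ℝ) ≤ (Y.card : ℝ) →
    |densBip E Finset.univ Finset.univ - densBip E X Y| < ε'

/-!
Colour the edges of `E` independently and uniformly with `M ≈ K/ε` colours and let `S i` consist
of the edges whose colour lies in the `i`-th of `⌊K⌋` disjoint blocks of `t ≈ M/K` colours, so
that an edge lands in `S i` with probability `p = t/M ∈ [(1 - ε)/K, 1/K]`. For fixed `i` and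
`|X|, |Y| ≥ εm`, an exponential-moment (Chernoff) bound based on `exp x ≤ 1 + x + x²` shows that
`e(S i; X, Y)` deviates from `p·e(E; X, Y)` by more than `(ε/K)|X||Y| ≥ (ε³/K)m²` for at most a
`2 exp(-ε⁶m²/(4K²))` fraction of the colourings, so a union bound over the `⌊K⌋·4^m` triples
`(i, X, Y)` leaves a colouring with no such deviation. Then `d(S i; X, Y)` is within `ε/K` of
`p·d(E; X, Y)` for all large `X, Y`, and by the triangle inequality the `ε`-regularity of `E`
gives `|d(S i) - d(S i; X, Y)| ≤ 2ε/K + pε < 4ε/K`.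
-/

open Finset Real

section RandomColoring

variable {γ V : Type*} [Fintype γ] [Fintype V] [DecidableEq V]

theorem prod_ite_mem_const {M : Type*} [CommMonoid M] (R : Finset γ) (a b : M) :
    ∏ e : γ, (if e ∈ R then a else b) = a ^ #R * b ^ (Fintype.card γ - #R) := by
  rw [prod_ite, prod_const, prod_const, filter_mem_eq_inter, univ_inter, filter_not, card_sdiff]
  simp

theorem sum_ite_mem_else_one {R : Type*} [CommRing R] (T : Finset V) (x : R) :
    ∑ v : V, (if v ∈ T then x else 1) = Fintype.card V + #T * (x - 1) := by
  have h : ∀ v : V, (if v ∈ T then x else 1) = 1 + if v ∈ T then x - 1 else 0 := by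
    intro v; split_ifs <;> ring
  simp only [h, sum_add_distrib, sum_const, card_univ, nsmul_eq_mul, mul_one, sum_ite_mem,
    univ_inter]

theorem sum_exp_mul_card_filter_mem (R : Finset γ) (T : Finset V) (t : ℝ) :
    ∑ g : γ → V, exp (t * #{e ∈ R | g e ∈ T}) =
      (Fintype.card V + #T * (exp t - 1)) ^ #R * (Fintype.card V : ℝ) ^ (Fintype.card γ - #R) := by
  set F : γ → V → ℝ := fun e v => if e ∈ R then (if v ∈ T then exp t else 1) else 1
  calc ∑ g : γ → V, exp (t * #{e ∈ R | g e ∈ T}) = ∑ g : γ → V, ∏ e, F e (g e) := by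
        refine sum_congr rfl fun g _ => ?_
        rw [prod_ite_mem, univ_inter, prod_ite, prod_const_one, mul_one, prod_const, mul_comm,
          exp_nat_mul]
    _ = ∏ e, ∑ v, F e v := (Fintype.prod_sum F).symm
    _ = ∏ e, if e ∈ R then Fintype.card V + #T * (exp t - 1) else (Fintype.card V : ℝ) := by
        refine prod_congr rfl fun e _ => ?_
        split_ifs with he
        · simp only [F, he, if_true, sum_ite_mem_else_one]
        · simp [F, he]
    _ = _ := prod_ite_mem_const R _ _

theorem sum_exp_mul_card_filter_mem_le [Nonempty V] (R : Finset γ) (T : Finset V) {t : ℝ}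
    (ht : |t| ≤ 1) :
    ∑ g : γ → V, exp (t * #{e ∈ R | g e ∈ T}) ≤
      (Fintype.card V : ℝ) ^ Fintype.card γ * exp (#T / Fintype.card V * #R * (t + t ^ 2)) := by
  set n : ℝ := (Fintype.card V : ℝ)
  have hn : 0 < n := by positivity
  have hT : (#T : ℝ) ≤ n := by simp only [n]; exact_mod_cast card_le_univ T
  have hexp : exp t - 1 ≤ t + t ^ 2 := by linarith [(abs_le.mp (abs_exp_sub_one_sub_id_le ht)).2]
  have hbase : n + #T * (exp t - 1) ≤ n * exp (#T / n * (t + t ^ 2)) :=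
    calc n + #T * (exp t - 1) ≤ n * (#T / n * (t + t ^ 2) + 1) := by
          rw [mul_add, ← mul_assoc, mul_div_cancel₀ _ hn.ne', mul_one, add_comm]
          gcongr
      _ ≤ n * exp (#T / n * (t + t ^ 2)) := by gcongr; exact add_one_le_exp _
  have hbase₀ : 0 ≤ n + #T * (exp t - 1) := by nlinarith [exp_pos t]
  rw [sum_exp_mul_card_filter_mem]
  calc (n + #T * (exp t - 1)) ^ #R * n ^ (Fintype.card γ - #R)
      ≤ (n * exp (#T / n * (t + t ^ 2))) ^ #R * n ^ (Fintype.card γ - #R) := by gcongr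
    _ = n ^ Fintype.card γ * exp (#T / n * #R * (t + t ^ 2)) := by
        rw [mul_pow, ← exp_nat_mul, mul_right_comm, ← pow_add, Nat.add_sub_cancel' (card_le_univ R)]
        ring_nf

theorem card_chernoff_tail_le [Nonempty V] (R : Finset γ) (T : Finset V) {t : ℝ} (ht : |t| ≤ 1)
    (a : ℝ) :
    (#{g : γ → V | a ≤ t * (#{e ∈ R | g e ∈ T} - #T / Fintype.card V * #R)} : ℝ) ≤
      (Fintype.card V : ℝ) ^ Fintype.card γ * exp (#T / Fintype.card V * #R * t ^ 2 - a) := by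
  set c : ℝ := #T / Fintype.card V * #R
  set Bad := ({g : γ → V | a ≤ t * (#{e ∈ R | g e ∈ T} - c)} : Finset (γ → V))
  have hmarkov : #Bad • exp (a + t * c) ≤ ∑ g ∈ Bad, exp (t * #{e ∈ R | g e ∈ T}) :=
    card_nsmul_le_sum _ _ _ fun g hg => exp_le_exp.mpr (by linarith [(mem_filter.mp hg).2])
  have hsub : ∑ g ∈ Bad, exp (t * #{e ∈ R | g e ∈ T}) ≤ ∑ g : γ → V, exp (t * #{e ∈ R | g e ∈ T}) :=
    sum_le_univ_sum_of_nonneg fun g => (exp_pos _).le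
  have hbound := (hmarkov.trans hsub).trans (sum_exp_mul_card_filter_mem_le R T ht)
  rw [nsmul_eq_mul, ← le_div_iff₀ (exp_pos _), mul_div_assoc, ← exp_sub] at hbound
  refine hbound.trans_eq ?_
  congr 2
  simp only [c]
  ring

theorem card_chernoff_two_sided_le [Nonempty V] (R : Finset γ) (T : Finset V) {t : ℝ} (ht₀ : 0 ≤ t)
    (ht₁ : t ≤ 1) (s : ℝ) :
    (#{g : γ → V | s < |(#{e ∈ R | g e ∈ T} : ℝ) - #T / Fintype.card V * #R|} : ℝ) ≤
      2 * (Fintype.card V : ℝ) ^ Fintype.card γ *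
        exp (#T / Fintype.card V * #R * t ^ 2 - t * s) := by
  set c : ℝ := #T / Fintype.card V * #R
  have hsub : ({g : γ → V | s < |(#{e ∈ R | g e ∈ T} : ℝ) - c|} : Finset (γ → V)) ⊆
      ({g : γ → V | t * s ≤ t * (#{e ∈ R | g e ∈ T} - c)} : Finset (γ → V)) ∪
        ({g : γ → V | t * s ≤ -t * (#{e ∈ R | g e ∈ T} - c)} : Finset (γ → V)) := by
    intro g hg
    simp only [mem_union, mem_filter, mem_univ, true_and] at hg ⊢
    rcases abs_cases ((#{e ∈ R | g e ∈ T} : ℝ) - c) with ⟨h, _⟩ | ⟨h, _⟩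
    · left; rw [h] at hg; exact mul_le_mul_of_nonneg_left hg.le ht₀
    · right; rw [h] at hg; linarith [mul_le_mul_of_nonneg_left hg.le ht₀]
  have hup := card_chernoff_tail_le R T (abs_le.mpr ⟨by linarith, ht₁⟩) (t * s)
  have hlo := card_chernoff_tail_le R T (t := -t) (abs_le.mpr ⟨by linarith, by linarith⟩) (t * s)
  rw [neg_sq] at hlo
  calc (#{g : γ → V | s < |(#{e ∈ R | g e ∈ T} : ℝ) - c|} : ℝ)
      ≤ #{g : γ → V | t * s ≤ t * (#{e ∈ R | g e ∈ T} - c)} +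
          #{g : γ → V | t * s ≤ -t * (#{e ∈ R | g e ∈ T} - c)} := by
        exact_mod_cast (card_le_card hsub).trans (card_union_le _ _)
    _ ≤ _ := by linarith

theorem exists_forall_abs_card_filter_mem_sub_le [Nonempty V] {ι : Type*} (A : Finset ι)
    (R : ι → Finset γ) (T : ι → Finset V) (s : ι → ℝ) {t r : ℝ} (ht₀ : 0 ≤ t) (ht₁ : t ≤ 1)
    (hrate : ∀ z ∈ A, #(T z) / Fintype.card V * #(R z) * t ^ 2 - t * s z ≤ -r)
    (hA : 2 * #A < exp r) :
    ∃ g : γ → V, ∀ z ∈ A,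
      |(#{e ∈ R z | g e ∈ T z} : ℝ) - #(T z) / Fintype.card V * #(R z)| ≤ s z := by
  set N : ℝ := (Fintype.card V : ℝ) ^ Fintype.card γ
  set Bad : ι → Finset (γ → V) := fun z =>
    {g | s z < |(#{e ∈ R z | g e ∈ T z} : ℝ) - #(T z) / Fintype.card V * #(R z)|}
  have hBad : ∀ z ∈ A, (#(Bad z) : ℝ) ≤ 2 * N * exp (-r) := fun z hz =>
    (card_chernoff_two_sided_le (R z) (T z) ht₀ ht₁ (s z)).trans (by gcongr; exact hrate z hz)
  have hsum : ∑ z ∈ A, #(Bad z) < Fintype.card (γ → V) := by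
    have hN : 0 < N := by positivity
    have : 2 * #A * exp (-r) < 1 := by
      rwa [exp_neg, ← div_eq_mul_inv, div_lt_one (exp_pos r)]
    rw [← Nat.cast_lt (α := ℝ), Fintype.card_fun, Nat.cast_sum, Nat.cast_pow]
    calc ∑ z ∈ A, (#(Bad z) : ℝ) ≤ ∑ z ∈ A, 2 * N * exp (-r) := sum_le_sum hBad
      _ = (2 * #A * exp (-r)) * N := by rw [sum_const, nsmul_eq_mul]; ring
      _ < 1 * N := by gcongr
      _ = N := one_mul N
  by_contra! hcon
  have hcover : (univ : Finset (γ → V)) ⊆ A.biUnion Bad := fun g _ => by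
    obtain ⟨z, hz, hg⟩ := hcon g
    exact mem_biUnion.mpr ⟨z, hz, mem_filter.mpr ⟨mem_univ g, hg⟩⟩
  have := (card_le_card hcover).trans card_biUnion_le
  rw [card_univ] at this
  omega

end RandomColoring

theorem mul_card_le_card_univ {α : Type*} [Fintype α] {ε : ℝ} (hε : ε ≤ 1) :
    ε * Fintype.card α ≤ #(univ : Finset α) := by
  rw [card_univ]
  exact mul_le_of_le_one_left (Nat.cast_nonneg _) hε

theorem exists_pairwise_disjoint_card_eq {V : Type*} [Fintype V] {k t : ℕ}
    (h : k * t ≤ Fintype.card V) :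
    ∃ T : Fin k → Finset V, (∀ i, #(T i) = t) ∧ ∀ i j, i ≠ j → Disjoint (T i) (T j) := by
  obtain ⟨f⟩ := Function.Embedding.nonempty_of_card_le (α := Fin k × Fin t) (by simpa using h)
  refine ⟨fun i =>
    univ.map ⟨fun j => f (i, j), fun j j' hj => (Prod.ext_iff.mp (f.injective hj)).2⟩,
    fun i => by simp, fun i i' hii' => disjoint_left.mpr ?_⟩
  simp only [mem_map, mem_univ, true_and]
  rintro _ ⟨j, rfl⟩ ⟨j', hj'⟩
  exact hii' (Prod.ext_iff.mp (f.injective hj')).1.symm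

theorem exists_nat_div_near_inv {K ε : ℝ} (hK : 0 < K) (hε : 0 < ε) :
    ∃ M t : ℕ, 0 < M ∧ ⌊K⌋₊ * t ≤ M ∧ (1 - ε) / K ≤ (t : ℝ) / M ∧ (t : ℝ) / M ≤ 1 / K := by
  set M := ⌈K / ε⌉₊
  have hKM : K / ε ≤ M := Nat.le_ceil _
  have hM : (0 : ℝ) < M := (div_pos hK hε).trans_le hKM
  refine ⟨M, ⌊M / K⌋₊, by exact_mod_cast hM, ?_, ?_, ?_⟩
  · have : (⌊K⌋₊ * ⌊M / K⌋₊ : ℝ) ≤ K * (M / K) :=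
      mul_le_mul (Nat.floor_le hK.le) (Nat.floor_le (by positivity)) (by positivity) hK.le
    rw [mul_div_cancel₀ _ hK.ne'] at this
    exact_mod_cast this
  · have hfloor : (M / K - 1 : ℝ) ≤ ⌊M / K⌋₊ := by linarith [Nat.lt_floor_add_one ((M : ℝ) / K)]
    have hinv : 1 / (M : ℝ) ≤ ε / K := by
      rw [div_le_div_iff₀ hM hK]; rw [div_le_iff₀ hε] at hKM; linarith
    calc (1 - ε) / K = 1 / K - ε / K := by ring
      _ ≤ 1 / K - 1 / M := by linarith
      _ = (M / K - 1) / M := by field_simp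
      _ ≤ ⌊M / K⌋₊ / M := by gcongr
  · rw [div_le_iff₀ hM, one_div_mul_eq_div]
    exact Nat.floor_le (by positivity)

theorem exists_mul_pow_lt_exp_mul_sq {a b c : ℝ} (ha : 0 < a) (hb : 0 < b) (hc : 0 < c) :
    ∃ m₀ : ℕ, ∀ m ≥ m₀, a * b ^ m < exp (c * m ^ 2) := by
  set L := |log a| + |log b| + 1
  refine ⟨⌈L / c⌉₊ + 1, fun m hm => ?_⟩
  have hm₁ : (1 : ℝ) ≤ m := by exact_mod_cast (Nat.le_add_left 1 _).trans hm
  have hLm : L ≤ c * m := by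
    rw [← div_le_iff₀' hc]
    exact (Nat.le_ceil _).trans (by exact_mod_cast (Nat.le_succ _).trans hm)
  have hlog : log a + m * log b < m * L := by
    have h₁ : log a ≤ m * |log a| :=
      (le_abs_self _).trans (le_mul_of_one_le_left (abs_nonneg _) hm₁)
    have h₂ : m * log b ≤ m * |log b| := mul_le_mul_of_nonneg_left (le_abs_self _) (by linarith)
    simp only [L]; nlinarith
  calc a * b ^ m = exp (log a + m * log b) := by rw [exp_add, exp_nat_mul, exp_log ha, exp_log hb]
    _ < exp (c * m ^ 2) := exp_lt_exp.mpr (by nlinarith)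

section Bipartite

variable {α β : Type*}

theorem eBip_le_card_mul_card (E : Finset (α × β)) (X : Finset α) (Y : Finset β) :
    eBip E X Y ≤ #X * #Y := by
  rw [eBip, ← card_product]
  exact card_le_card fun e he => mem_product.mpr (mem_filter.mp he).2

theorem densBip_nonneg (E : Finset (α × β)) (X : Finset α) (Y : Finset β) : 0 ≤ densBip E X Y := by
  unfold densBip; positivity

theorem densBip_le_one (E : Finset (α × β)) (X : Finset α) (Y : Finset β) : densBip E X Y ≤ 1 :=
  div_le_one_of_le₀ (by exact_mod_cast eBip_le_card_mul_card E X Y) (by positivity)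

theorem eBip_filter (E : Finset (α × β)) (P : α × β → Prop) [DecidablePred P] (X : Finset α)
    (Y : Finset β) :
    eBip (E.filter P) X Y = #{e ∈ E.filter (fun e => e.1 ∈ X ∧ e.2 ∈ Y) | P e} := by
  rw [eBip, filter_filter, filter_filter]
  simp only [and_comm]

theorem exists_coloring_forall_abs_densBip_sub_le [Fintype α] [Fintype β] {V ι : Type*}
    [Fintype V] [DecidableEq V] [Nonempty V] [Fintype ι] (E : Finset (α × β)) (T : ι → Finset V)
    {ε δ : ℝ} (hε : 0 ≤ ε) (hδ : 0 ≤ δ) (hδε : δ * ε ^ 2 ≤ 2)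
    (hsmall : 2 * Fintype.card ι * 2 ^ (Fintype.card α + Fintype.card β) <
      exp (δ ^ 2 * ε ^ 4 * (Fintype.card α * Fintype.card β) / 4)) :
    ∃ g : α × β → V, ∀ i X Y, ε * Fintype.card α ≤ #X → ε * Fintype.card β ≤ #Y →
      |densBip (E.filter (g · ∈ T i)) X Y - #(T i) / Fintype.card V * densBip E X Y| ≤ δ := by
  set a : ℝ := (Fintype.card α : ℝ)
  set b : ℝ := (Fintype.card β : ℝ)
  -- minimises `a * b * t ^ 2 - t * δ * ε ^ 2 * (a * b)`, the bound on the exponent in `hrate`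
  set t := δ * ε ^ 2 / 2
  let R : ι × Finset α × Finset β → Finset (α × β) := fun z =>
    E.filter fun e => e.1 ∈ z.2.1 ∧ e.2 ∈ z.2.2
  let A : Finset (ι × Finset α × Finset β) := {z | ε * a ≤ #z.2.1 ∧ ε * b ≤ #z.2.2}
  have hrate : ∀ z ∈ A, #(T z.1) / Fintype.card V * #(R z) * t ^ 2 - t * (δ * #z.2.1 * #z.2.2)
      ≤ -(δ ^ 2 * ε ^ 4 * (a * b) / 4) := by
    rintro ⟨i, X, Y⟩ hz
    obtain ⟨hX, hY⟩ := (mem_filter.mp hz).2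
    have hp : (#(T i) : ℝ) / Fintype.card V ≤ 1 :=
      div_le_one_of_le₀ (by exact_mod_cast card_le_univ _) (Nat.cast_nonneg _)
    have hR : (#(R (i, X, Y)) : ℝ) ≤ a * b := by
      simp only [a, b]; exact_mod_cast (card_le_univ _).trans_eq (Fintype.card_prod α β)
    have hXY : ε ^ 2 * (a * b) ≤ #X * #Y := by
      have := mul_le_mul hX hY (by positivity) (by positivity); linarith
    have hedges : #(T i) / Fintype.card V * #(R (i, X, Y)) * t ^ 2 ≤ a * b * t ^ 2 :=
      mul_le_mul_of_nonneg_right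
        ((mul_le_of_le_one_left (Nat.cast_nonneg _) hp).trans hR) (sq_nonneg t)
    have hdev : t * (δ * (ε ^ 2 * (a * b))) ≤ t * (δ * #X * #Y) := by
      rw [mul_assoc δ]; gcongr
    calc #(T i) / Fintype.card V * #(R (i, X, Y)) * t ^ 2 - t * (δ * #X * #Y)
        ≤ a * b * t ^ 2 - t * (δ * (ε ^ 2 * (a * b))) := by linarith
      _ = -(δ ^ 2 * ε ^ 4 * (a * b) / 4) := by ring
  have hA : 2 * (#A : ℝ) < exp (δ ^ 2 * ε ^ 4 * (a * b) / 4) := by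
    refine lt_of_le_of_lt ?_ hsmall
    have : #A ≤ Fintype.card ι * 2 ^ (Fintype.card α + Fintype.card β) := by
      refine (card_le_univ A).trans_eq ?_
      simp [Fintype.card_prod, Fintype.card_finset, pow_add]
    rw [mul_assoc]; gcongr; exact_mod_cast this
  obtain ⟨g, hg⟩ := exists_forall_abs_card_filter_mem_sub_le A R (fun z => T z.1)
    (fun z => δ * #z.2.1 * #z.2.2) (by positivity) (by simp only [t]; linarith) hrate hA
  refine ⟨g, fun i X Y hX hY => ?_⟩
  have hcount : |(#{e ∈ E.filter (fun e => e.1 ∈ X ∧ e.2 ∈ Y) | g e ∈ T i} : ℝ) -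
      #(T i) / Fintype.card V * eBip E X Y| ≤ δ * #X * #Y :=
    hg (i, X, Y) (mem_filter.mpr ⟨mem_univ _, hX, hY⟩)
  rw [densBip, densBip, eBip_filter, mul_div_assoc', ← sub_div, abs_div,
    abs_of_nonneg (by positivity : (0 : ℝ) ≤ #X * #Y)]
  exact div_le_of_le_mul₀ (by positivity) hδ (by rw [← mul_assoc]; exact hcount)

theorem isRegularBip_of_abs_densBip_sub_le [Fintype α] [Fintype β] {S E : Finset (α × β)}
    {ε ε' ε'' δ p : ℝ} (hε : ε ≤ 1) (hp : 0 ≤ p) (hE : IsRegularBip E ε ε')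
    (happrox : ∀ X Y, ε * Fintype.card α ≤ #X → ε * Fintype.card β ≤ #Y →
      |densBip S X Y - p * densBip E X Y| ≤ δ)
    (h : 2 * δ + p * ε' < ε'') :
    IsRegularBip S ε ε'' := by
  intro X Y hX hY
  have hfull := happrox univ univ (mul_card_le_card_univ hε) (mul_card_le_card_univ hε)
  have hpart := happrox X Y hX hY
  have hmid : |p * densBip E univ univ - p * densBip E X Y| ≤ p * ε' := by
    rw [← mul_sub, abs_mul, abs_of_nonneg hp]
    exact mul_le_mul_of_nonneg_left (hE X Y hX hY).le hp
  have h₁ := abs_sub_le (densBip S univ univ) (p * densBip E univ univ) (densBip S X Y)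
  have h₂ := abs_sub_le (p * densBip E univ univ) (p * densBip E X Y) (densBip S X Y)
  rw [abs_sub_comm] at hpart
  linarith

theorem densBip_univ_bounds_of_abs_sub_le [Fintype α] [Fintype β] {S E : Finset (α × β)}
    {ε K p : ℝ} (hε : 0 ≤ ε) (hK : 0 < K) (hp₁ : (1 - ε) / K ≤ p) (hp₂ : p ≤ 1 / K)
    (h : |densBip S univ univ - p * densBip E univ univ| ≤ ε / K) :
    (densBip E univ univ - 2 * ε) / K ≤ densBip S univ univ ∧
      densBip S univ univ ≤ (densBip E univ univ + 2 * ε) / K := by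
  set d := densBip E univ univ
  have hd₀ : 0 ≤ d := densBip_nonneg E univ univ
  have hd₁ : d ≤ 1 := densBip_le_one E univ univ
  have hlo : (d - ε) / K ≤ p * d :=
    calc (d - ε) / K ≤ (1 - ε) / K * d := by rw [div_mul_eq_mul_div]; gcongr; nlinarith
      _ ≤ p * d := by gcongr
  have hhi : p * d ≤ d / K := by rw [div_eq_mul_one_div d, mul_comm d]; gcongr
  obtain ⟨h₁, h₂⟩ := abs_le.mp h
  constructor
  · linarith [show (d - 2 * ε) / K = (d - ε) / K - ε / K by ring]
  · linarith [show (d + 2 * ε) / K = d / K + 2 * (ε / K) by ring]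

end Bipartite

/-- an ε-regular pair of density `d` splits into `⌊K⌋` edge-disjoint spanning
subgraphs, each `[ε, 4ε/K]`-regular of density between `(d−2ε)/K` and `(d+2ε)/K`. -/
theorem split_regular_pair_into_regular_subgraphs :
    ∃ c : ℝ, 0 < c ∧ c < 1 ∧
    ∀ d₀ : ℝ, 0 < d₀ → d₀ ≤ c →
    ∃ ε₀ : ℝ, 0 < ε₀ ∧
    ∀ ε : ℝ, 0 < ε → ε ≤ ε₀ →
    ∀ K : ℝ, 1 ≤ K →
    ∃ m₀ : ℕ, ∀ d : ℝ, d₀ ≤ d →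
    ∀ m : ℕ, m₀ ≤ m →
    ∀ (α β : Type) [Fintype α] [Fintype β],
      Fintype.card α = m → Fintype.card β = m →
    ∀ E : Finset (α × β),
      IsRegularBip E ε ε → densBip E Finset.univ Finset.univ = d →
      ∃ S : Fin ⌊K⌋₊ → Finset (α × β),
        (∀ i, S i ⊆ E) ∧
        (∀ i j, i ≠ j → Disjoint (S i) (S j)) ∧
        (∀ i, IsRegularBip (S i) ε (4 * ε / K)) ∧
        (∀ i, (d - 2*ε)/K ≤ densBip (S i) Finset.univ Finset.univ ∧
              densBip (S i) Finset.univ Finset.univ ≤ (d + 2*ε)/K) := by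
  refine ⟨1 / 2, by norm_num, by norm_num, fun d₀ _ _ => ⟨1, one_pos, fun ε hε hε₁ K hK => ?_⟩⟩
  have hK₀ : 0 < K := one_pos.trans_le hK
  have hk : 0 < ⌊K⌋₊ := Nat.floor_pos.mpr hK
  obtain ⟨M, t, hM, hkt, hp₁, hp₂⟩ := exists_nat_div_near_inv hK₀ hε
  obtain ⟨m₀, hm₀⟩ := exists_mul_pow_lt_exp_mul_sq (a := 2 * ⌊K⌋₊) (b := 4)
    (c := (ε / K) ^ 2 * ε ^ 4 / 4) (by positivity) (by norm_num) (by positivity)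
  refine ⟨m₀, fun d _ m hm α β _ _ hα hβ E hE hd => ?_⟩
  obtain ⟨T, hT, hTdisj⟩ := exists_pairwise_disjoint_card_eq (V := Fin M) (by simpa using hkt)
  have : Nonempty (Fin M) := ⟨⟨0, hM⟩⟩
  have hδε : ε / K * ε ^ 2 ≤ 2 := by
    have : ε / K ≤ 1 := (div_le_one hK₀).mpr (hε₁.trans hK)
    nlinarith [pow_le_one₀ hε.le hε₁ (n := 2)]
  have hsmall : 2 * Fintype.card (Fin ⌊K⌋₊) * (2 : ℝ) ^ (Fintype.card α + Fintype.card β) <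
      exp ((ε / K) ^ 2 * ε ^ 4 * (Fintype.card α * Fintype.card β) / 4) := by
    have h4 : (2 : ℝ) ^ (m + m) = 4 ^ m := by rw [← two_mul, pow_mul]; norm_num
    simp only [Fintype.card_fin, hα, hβ, h4]
    convert hm₀ m hm using 2
    ring
  obtain ⟨g, hg⟩ := exists_coloring_forall_abs_densBip_sub_le E T hε.le (by positivity) hδε hsmall
  simp only [hT, Fintype.card_fin] at hg
  refine ⟨fun i => E.filter (g · ∈ T i), fun i => filter_subset _ _,
    fun i j hij => disjoint_filter.mpr fun e _ h₁ h₂ => disjoint_left.mp (hTdisj i j hij) h₁ h₂,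
    fun i => isRegularBip_of_abs_densBip_sub_le hε₁ (by positivity) hE (hg i) ?_,
    fun i => hd ▸ densBip_univ_bounds_of_abs_sub_le hε.le hK₀ hp₁ hp₂
      (hg i univ univ (mul_card_le_card_univ hε₁) (mul_card_le_card_univ hε₁))⟩
  have : t / M * ε ≤ ε / K := by rw [div_eq_mul_one_div ε, mul_comm]; gcongr
  linarith [show 4 * ε / K = 4 * (ε / K) by ring, div_pos hε hK₀]
end

section
/- For every sufficiently small d₀ ∈ (0,1) and every ε > 0 sufficiently small in terms of d₀ there exists an integer m₀ = m₀(ε, d₀) such that for all d ≥ d₀ the following holds: if G is a bipartite graph with vertex classes A and B of size |A| = |B| = m ≥ m₀ which is (ε, d)-super-regular, then G contains two edge-disjoint spanning subgraphs S₁ and S₂ each of which is (2ε, d/2)-super-regular. -/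
/-!
Split `E` into `S` and `E \ S` for a subset `S ⊆ E`. For uniformly random `S`, each count
`#{e ∈ S | p e}` is a sum of independent fair bits, so Hoeffding's inequality (proved here by
counting over `E.powerset`) bounds the proportion of `S` for which it deviates from
`#{e ∈ E | p e} / 2` by more than `t` by `2 exp (-2 t² / n)`. Applied to the edge counts
`e(X, Y)` of the at most `4^m` pairs with `|X|, |Y| ≥ 2εm` (tolerance `(3/2) ε |X| |Y|`) and to
the `2m` degrees, a union bound leaves some `S` for which no count deviates, and `E \ S` deviates
exactly as much as `S`. Halving the `(ε, d)` bounds of `E` within these errors gives `(2ε, d/2)`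
bounds for both halves, as soon as `ε⁴ m ≥ 1`.
-/

open scoped Classical

/-- Degree of a vertex of the first class. -/
noncomputable def degL {α β : Type*} (E : Finset (α × β)) (a : α) : ℕ :=
  (E.filter fun e => e.1 = a).card

/-- Degree of a vertex of the second class. -/
noncomputable def degR {α β : Type*} (E : Finset (α × β)) (b : β) : ℕ :=
  (E.filter fun e => e.2 = b).card

/-- `E` (with vertex classes the whole of `α` and `β`) is `(ε,d)`-super-regular. -/
def IsSuperRegularBip {α β : Type*} [Fintype α] [Fintype β] (E : Finset (α × β))
    (ε d : ℝ) : Prop :=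
  (∀ X : Finset α, ∀ Y : Finset β,
      ε * (Fintype.card α : ℝ) ≤ (X.card : ℝ) → ε * (Fintype.card β : ℝ) ≤ (Y.card : ℝ) →
      d - ε ≤ densBip E X Y ∧ densBip E X Y ≤ d + ε) ∧
  (∀ a : α, (d - ε) * (Fintype.card β : ℝ) ≤ (degL E a : ℝ) ∧
            (degL E a : ℝ) ≤ (d + ε) * (Fintype.card β : ℝ)) ∧
  (∀ b : β, (d - ε) * (Fintype.card α : ℝ) ≤ (degR E b : ℝ) ∧
            (degR E b : ℝ) ≤ (d + ε) * (Fintype.card α : ℝ))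

open Finset Real

section RandomSplit

variable {ι : Type*} (E : Finset ι) (p : ι → Prop) [DecidablePred p]

theorem prod_exp_ite_eq (s : Finset ι) (c : ℝ) :
    ∏ i ∈ s, exp (if p i then c else 0) = exp (#(s.filter p) * c) := by
  rw [← exp_sum, sum_ite, sum_const_zero, add_zero, sum_const, nsmul_eq_mul]

theorem card_filter_sdiff_add_card_filter [DecidableEq ι] {S : Finset ι} (hS : S ⊆ E) :
    #((E \ S).filter p) + #(S.filter p) = #(E.filter p) := by
  rw [show (E \ S).filter p = E.filter p \ S.filter p by ext; simp; tauto]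
  exact card_sdiff_add_card_eq_card (filter_subset_filter p hS)

-- The sum is `∏ i ∈ E, (x i + y i)` expanded over `E.powerset`; each factor is
-- `2 cosh (c/2) ≤ 2 exp (c²/8)` or `2`.
theorem sum_powerset_exp_mul_card_filter_sub_half_le (c : ℝ) :
    ∑ S ∈ E.powerset, exp (c * (#(S.filter p) - #(E.filter p) / 2 : ℝ))
      ≤ 2 ^ #E * exp (c ^ 2 * #(E.filter p) / 8) := by
  set x : ι → ℝ := fun i => exp (if p i then c / 2 else 0)
  set y : ι → ℝ := fun i => exp (if p i then -(c / 2) else 0)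
  have hterm : ∀ S ∈ E.powerset, exp (c * (#(S.filter p) - #(E.filter p) / 2 : ℝ))
      = (∏ i ∈ S, x i) * ∏ i ∈ E \ S, y i := by
    intro S hS
    have hcard := card_filter_sdiff_add_card_filter E p (mem_powerset.mp hS)
    rw [prod_exp_ite_eq, prod_exp_ite_eq, ← exp_add, ← hcard]
    push_cast
    ring_nf
  have hfactor : ∀ i ∈ E, x i + y i ≤ 2 * exp (if p i then c ^ 2 / 8 else 0) := by
    intro i _
    by_cases hi : p i
    · simp only [x, y, hi, if_true]
      calc exp (c / 2) + exp (-(c / 2)) = 2 * cosh (c / 2) := by rw [cosh_eq]; ring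
        _ ≤ 2 * exp ((c / 2) ^ 2 / 2) := by gcongr; exact cosh_le_exp_half_sq _
        _ = 2 * exp (c ^ 2 / 8) := by ring_nf
    · simp only [x, y, hi, if_false, exp_zero, mul_one]; norm_num
  calc ∑ S ∈ E.powerset, exp (c * (#(S.filter p) - #(E.filter p) / 2 : ℝ))
      = ∏ i ∈ E, (x i + y i) := by rw [sum_congr rfl hterm, prod_add]
    _ ≤ ∏ i ∈ E, 2 * exp (if p i then c ^ 2 / 8 else 0) :=
      prod_le_prod (fun i _ => by positivity) hfactor
    _ = 2 ^ #E * exp (c ^ 2 * #(E.filter p) / 8) := by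
      rw [prod_mul_distrib, prod_const, prod_exp_ite_eq]; ring_nf

-- Markov's inequality for `exp (l * c * deviation)` with Hoeffding's choice `l = 4 t / n`.
theorem card_powerset_filter_lt_mul_card_filter_sub_half_le {c t n : ℝ} (hc : c ^ 2 = 1)
    (ht : 0 ≤ t) (hn : #(E.filter p) ≤ n) :
    #{S ∈ E.powerset | t < c * (#(S.filter p) - #(E.filter p) / 2 : ℝ)}
      ≤ 2 ^ #E * exp (-2 * t ^ 2 / n) := by
  set bad := {S ∈ E.powerset | t < c * (#(S.filter p) - #(E.filter p) / 2 : ℝ)}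
  set l := 4 * t / n
  have hl : 0 ≤ l := div_nonneg (by positivity) ((Nat.cast_nonneg _).trans hn)
  have hexponent : l ^ 2 * n / 8 = -2 * t ^ 2 / n + l * t := by
    rcases eq_or_ne n 0 with rfl | hn0
    · simp [l]
    · simp only [l]; field_simp; ring
  have hmarkov : #bad * exp (l * t)
      ≤ ∑ S ∈ E.powerset, exp (l * c * (#(S.filter p) - #(E.filter p) / 2 : ℝ)) := by
    calc #bad * exp (l * t) = #bad • exp (l * t) := (nsmul_eq_mul _ _).symm
      _ ≤ ∑ S ∈ bad, exp (l * c * (#(S.filter p) - #(E.filter p) / 2 : ℝ)) := by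
        refine card_nsmul_le_sum _ _ _ fun S hS => exp_le_exp.mpr ?_
        rw [mul_assoc]
        exact mul_le_mul_of_nonneg_left (mem_filter.mp hS).2.le hl
      _ ≤ _ := sum_le_sum_of_subset_of_nonneg (filter_subset _ _) fun _ _ _ => (exp_pos _).le
  have hmgf := (hmarkov.trans (sum_powerset_exp_mul_card_filter_sub_half_le E p (l * c))).trans
    (show 2 ^ #E * exp ((l * c) ^ 2 * #(E.filter p) / 8) ≤ 2 ^ #E * exp (l ^ 2 * n / 8) by
      rw [mul_pow, hc, mul_one]; gcongr)
  rw [hexponent, exp_add, ← mul_assoc] at hmgf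
  exact le_of_mul_le_mul_right hmgf (exp_pos _)

theorem card_powerset_filter_lt_abs_card_filter_sub_half_le {t n : ℝ} (ht : 0 ≤ t)
    (hn : #(E.filter p) ≤ n) :
    #{S ∈ E.powerset | t < |(#(S.filter p) - #(E.filter p) / 2 : ℝ)|}
      ≤ 2 * 2 ^ #E * exp (-2 * t ^ 2 / n) := by
  simp_rw [lt_abs, filter_or]
  have hup := card_powerset_filter_lt_mul_card_filter_sub_half_le E p (one_pow 2) ht hn
  have hlow := card_powerset_filter_lt_mul_card_filter_sub_half_le E p
    (by norm_num : (-1 : ℝ) ^ 2 = 1) ht hn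
  simp only [one_mul, neg_one_mul] at hup hlow
  calc _ ≤ (#{S ∈ E.powerset | t < (#(S.filter p) - #(E.filter p) / 2 : ℝ)} : ℝ)
        + #{S ∈ E.powerset | t < -(#(S.filter p) - #(E.filter p) / 2 : ℝ)} := by
        exact_mod_cast card_union_le _ _
    _ ≤ _ := by linarith

theorem abs_card_filter_sdiff_sub_half [DecidableEq ι] {S : Finset ι} (hS : S ⊆ E) :
    |(#((E \ S).filter p) - #(E.filter p) / 2 : ℝ)|
      = |(#(S.filter p) - #(E.filter p) / 2 : ℝ)| := by
  have hcard : (#((E \ S).filter p) : ℝ) = #(E.filter p) - #(S.filter p) := by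
    rw [← card_filter_sdiff_add_card_filter E p hS]; push_cast; ring
  rw [hcard, ← abs_neg]
  ring_nf

end RandomSplit

theorem exists_subset_forall_abs_card_filter_sub_half_le {ι κ : Type*} (E : Finset ι)
    (K : Finset κ) (p : κ → ι → Prop) [∀ k, DecidablePred (p k)] (t n : κ → ℝ)
    (ht : ∀ k ∈ K, 0 ≤ t k) (hn : ∀ k ∈ K, #(E.filter (p k)) ≤ n k)
    (hsum : ∑ k ∈ K, 2 * exp (-2 * t k ^ 2 / n k) < 1) :
    ∃ S ⊆ E, ∀ k ∈ K, |(#(S.filter (p k)) - #(E.filter (p k)) / 2 : ℝ)| ≤ t k := by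
  set bad := K.biUnion fun k =>
    {S ∈ E.powerset | t k < |(#(S.filter (p k)) - #(E.filter (p k)) / 2 : ℝ)|}
  have hbad : #bad < #E.powerset := by
    have hpos : (0 : ℝ) < 2 ^ #E := by positivity
    suffices (#bad : ℝ) < 2 ^ #E by rw [card_powerset]; exact_mod_cast this
    calc (#bad : ℝ) ≤ ∑ k ∈ K, (#{S ∈ E.powerset |
          t k < |(#(S.filter (p k)) - #(E.filter (p k)) / 2 : ℝ)|} : ℝ) := by
          exact_mod_cast card_biUnion_le
      _ ≤ ∑ k ∈ K, 2 * 2 ^ #E * exp (-2 * t k ^ 2 / n k) := sum_le_sum fun k hk =>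
          card_powerset_filter_lt_abs_card_filter_sub_half_le E (p k) (ht k hk) (hn k hk)
      _ = 2 ^ #E * ∑ k ∈ K, 2 * exp (-2 * t k ^ 2 / n k) := by rw [mul_sum]; ring_nf
      _ < 2 ^ #E := mul_lt_of_lt_one_right hpos hsum
  obtain ⟨S, hSE, hSgood⟩ := exists_mem_notMem_of_card_lt_card hbad
  refine ⟨S, mem_powerset.mp hSE, fun k hk => not_lt.mp fun hlt => hSgood ?_⟩
  exact mem_biUnion.mpr ⟨k, hk, mem_filter.mpr ⟨hSE, hlt⟩⟩

theorem half_bounds_of_abs_sub_half_le {n e e' d ε ε' δ : ℝ} (hn : 0 ≤ n)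
    (he : (d - ε) * n ≤ e ∧ e ≤ (d + ε) * n) (he' : |e' - e / 2| ≤ δ * n)
    (hδ : ε / 2 + δ ≤ ε') : (d / 2 - ε') * n ≤ e' ∧ e' ≤ (d / 2 + ε') * n := by
  obtain ⟨he'₁, he'₂⟩ := abs_le.mp he'
  constructor <;> nlinarith [he.1, he.2]

theorem half_div_bounds_of_abs_sub_half_le {x e e' d ε ε' δ : ℝ} (hx : 0 ≤ x)
    (he : d - ε ≤ e / x ∧ e / x ≤ d + ε) (he' : |e' - e / 2| ≤ δ * x) (hεε' : ε ≤ ε')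
    (hδ : ε / 2 + δ ≤ ε') : d / 2 - ε' ≤ e' / x ∧ e' / x ≤ d / 2 + ε' := by
  rcases hx.eq_or_lt with rfl | hx
  · simp only [div_zero] at he ⊢
    constructor <;> linarith [he.1, he.2]
  · rw [le_div_iff₀ hx, div_le_iff₀ hx] at he ⊢
    exact half_bounds_of_abs_sub_half_le hx.le he he' hδ

theorem sum_union_le_sum_add_sum {κ : Type*} [DecidableEq κ] {f : κ → ℝ} {s t : Finset κ}
    (hf : ∀ k ∈ s ∩ t, 0 ≤ f k) : ∑ k ∈ s ∪ t, f k ≤ ∑ k ∈ s, f k + ∑ k ∈ t, f k := by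
  rw [← sum_union_inter]
  exact le_add_of_nonneg_right (sum_nonneg hf)

theorem neg_two_mul_sq_mul_div_self (δ x : ℝ) : -2 * (δ * x) ^ 2 / x = -2 * δ ^ 2 * x := by
  rcases eq_or_ne x 0 with rfl | hx
  · simp
  · field_simp

theorem one_le_of_one_le_mul_natCast {a : ℝ} {m : ℕ} (hm : 1 ≤ a * m) : (1 : ℝ) ≤ m := by
  rcases Nat.eq_zero_or_pos m with rfl | hpos
  · simp only [Nat.cast_zero, mul_zero] at hm; linarith
  · exact_mod_cast hpos

theorem four_pow_mul_exp_le {ε : ℝ} {m : ℕ} (hm : 1 ≤ ε ^ 4 * m) :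
    (4 : ℝ) ^ m * exp (-18 * ε ^ 4 * m ^ 2) ≤ 1 / 8 := by
  have hm1 := one_le_of_one_le_mul_natCast hm
  have hfour : (4 : ℝ) ^ m ≤ exp (2 * m) := by
    have he : (2 : ℝ) ≤ exp 1 := by linarith [add_one_le_exp (1 : ℝ)]
    calc (4 : ℝ) ^ m = (2 ^ 2) ^ m := by norm_num
      _ ≤ (exp 1 ^ 2) ^ m := by gcongr
      _ = exp (2 * m) := by rw [← exp_nat_mul, ← exp_nat_mul]; ring_nf
  have hexp : exp (-16 * m) * (1 + 16 * m) ≤ 1 := by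
    calc exp (-16 * m) * (1 + 16 * m) ≤ exp (-16 * m) * exp (16 * m) := by
          gcongr; linarith [add_one_le_exp (16 * (m : ℝ))]
      _ = 1 := by rw [← exp_add]; ring_nf; exact exp_zero
  calc (4 : ℝ) ^ m * exp (-18 * ε ^ 4 * m ^ 2) ≤ exp (2 * m) * exp (-18 * m) :=
        mul_le_mul hfour (exp_le_exp.mpr (by nlinarith)) (exp_pos _).le (exp_pos _).le
    _ = exp (-16 * m) := by rw [← exp_add]; ring_nf
    _ ≤ 1 / 8 := by
        rw [le_div_iff₀ (by norm_num)]; nlinarith [exp_pos (-16 * (m : ℝ))]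

theorem natCast_mul_exp_le {ε : ℝ} {m : ℕ} (hm : 1 ≤ ε ^ 4 * m) :
    m * exp (-(9 / 2) * ε ^ 2 * m) ≤ 1 / 10 := by
  set y := 9 / 2 * ε ^ 2 * m
  have hy : 0 ≤ y := by positivity
  have hgrowth : 10 * (m : ℝ) ≤ exp y := by
    have := pow_div_factorial_le_exp y hy 2
    simp only [Nat.factorial_two, Nat.cast_ofNat, y] at this
    have hm1 := one_le_of_one_le_mul_natCast hm
    nlinarith
  have := mul_le_mul_of_nonneg_right hgrowth (exp_pos (-y)).le
  rw [mul_assoc, ← exp_add, add_neg_cancel, exp_zero] at this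
  have hy' : -(9 / 2) * ε ^ 2 * m = -y := by ring
  rw [hy']
  linarith

section SuperRegular

variable {α β : Type*}

theorem eBip_singleton_univ [Fintype β] (E : Finset (α × β)) (a : α) :
    eBip E {a} univ = degL E a := by
  simp [eBip, degL]

theorem eBip_univ_singleton [Fintype α] (E : Finset (α × β)) (b : β) :
    eBip E univ {b} = degR E b := by
  simp [eBip, degR]

variable [Fintype α] [Fintype β]

theorem IsSuperRegularBip.of_abs_sub_half_le {E S : Finset (α × β)} {ε d ε' δ : ℝ}
    (hE : IsSuperRegularBip E ε d) (hεε' : ε ≤ ε') (hδ : ε / 2 + δ ≤ ε')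
    (hpair : ∀ X : Finset α, ∀ Y : Finset β, ε' * Fintype.card α ≤ #X →
      ε' * Fintype.card β ≤ #Y → |(eBip S X Y - eBip E X Y / 2 : ℝ)| ≤ δ * (#X * #Y))
    (hleft : ∀ a, |(degL S a - degL E a / 2 : ℝ)| ≤ δ * Fintype.card β)
    (hright : ∀ b, |(degR S b - degR E b / 2 : ℝ)| ≤ δ * Fintype.card α) :
    IsSuperRegularBip S ε' (d / 2) := by
  refine ⟨fun X Y hX hY => ?_, fun a => ?_, fun b => ?_⟩
  · have hcard : ∀ n : ℕ, ∀ k : ℕ, ε' * n ≤ k → ε * n ≤ k := fun n k h =>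
      (mul_le_mul_of_nonneg_right hεε' n.cast_nonneg).trans h
    exact half_div_bounds_of_abs_sub_half_le (by positivity)
      (hE.1 X Y (hcard _ _ hX) (hcard _ _ hY)) (hpair X Y hX hY) hεε' hδ
  · exact half_bounds_of_abs_sub_half_le (Nat.cast_nonneg _) (hE.2.1 a) (hleft a) hδ
  · exact half_bounds_of_abs_sub_half_le (Nat.cast_nonneg _) (hE.2.2 b) (hright b) hδ

-- The stars `({a}, univ)` and `(univ, {b})` encode the degree conditions.
noncomputable def superRegularityTests (ε : ℝ) : Finset (Finset α × Finset β) :=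
  ({q | 2 * ε * Fintype.card α ≤ #q.1 ∧ 2 * ε * Fintype.card β ≤ #q.2} :
      Finset (Finset α × Finset β)) ∪
    univ.image (fun a : α => (({a} : Finset α), (univ : Finset β))) ∪
    univ.image (fun b : β => ((univ : Finset α), ({b} : Finset β)))

theorem IsSuperRegularBip.of_forall_mem_superRegularityTests {E T : Finset (α × β)} {ε d : ℝ}
    (hε : 0 ≤ ε) (hE : IsSuperRegularBip E ε d)
    (hT : ∀ q ∈ superRegularityTests ε,
      |(eBip T q.1 q.2 - eBip E q.1 q.2 / 2 : ℝ)| ≤ 3 / 2 * ε * (#q.1 * #q.2)) :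
    IsSuperRegularBip T (2 * ε) (d / 2) := by
  refine hE.of_abs_sub_half_le (by linarith) (by linarith)
    (fun X Y hX hY => hT (X, Y) ?_) (fun a => ?_) (fun b => ?_)
  · exact mem_union_left _ (mem_union_left _ (mem_filter.mpr ⟨mem_univ _, hX, hY⟩))
  · simpa [eBip_singleton_univ, mul_assoc] using
      hT ({a}, univ) (by simp [superRegularityTests])
  · simpa [eBip_univ_singleton, mul_assoc, mul_comm] using
      hT (univ, {b}) (by simp [superRegularityTests])

theorem sum_superRegularityTests_lt_one {ε : ℝ} {m : ℕ} (hα : Fintype.card α = m)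
    (hβ : Fintype.card β = m) (hε : 0 < ε) (hm : 1 ≤ ε ^ 4 * m) :
    ∑ q ∈ superRegularityTests (α := α) (β := β) ε,
      2 * exp (-(9 / 2) * ε ^ 2 * (#q.1 * #q.2)) < 1 := by
  set w : Finset α × Finset β → ℝ := fun q => 2 * exp (-(9 / 2) * ε ^ 2 * (#q.1 * #q.2))
  have hw0 : ∀ q, 0 ≤ w q := fun q => by positivity
  set pairs : Finset (Finset α × Finset β) :=
    {q | 2 * ε * Fintype.card α ≤ #q.1 ∧ 2 * ε * Fintype.card β ≤ #q.2}
  have hpairs : ∑ q ∈ pairs, w q ≤ 4 ^ m * (2 * exp (-18 * ε ^ 4 * m ^ 2)) := by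
    have hcard : (#pairs : ℝ) ≤ 4 ^ m := by
      have := card_le_univ pairs
      rw [Fintype.card_prod, Fintype.card_finset, Fintype.card_finset, hα, hβ, ← mul_pow] at this
      exact_mod_cast this
    calc ∑ q ∈ pairs, w q ≤ ∑ _q ∈ pairs, 2 * exp (-18 * ε ^ 4 * m ^ 2) := by
          refine sum_le_sum fun q hq => ?_
          obtain ⟨-, hX, hY⟩ := mem_filter.mp hq
          rw [hα] at hX
          rw [hβ] at hY
          have hXY := mul_le_mul hX hY (by positivity) (by positivity)
          simp only [w]
          gcongr 2 * exp ?_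
          nlinarith
      _ ≤ 4 ^ m * (2 * exp (-18 * ε ^ 4 * m ^ 2)) := by
          rw [sum_const, nsmul_eq_mul]; gcongr
  set left := univ.image fun a : α => (({a} : Finset α), (univ : Finset β))
  set right := univ.image fun b : β => ((univ : Finset α), ({b} : Finset β))
  have hleft : ∑ q ∈ left, w q ≤ m * (2 * exp (-(9 / 2) * ε ^ 2 * m)) :=
    (sum_image_le_of_nonneg fun q _ => hw0 q).trans_eq (by simp [w, hα, hβ])
  have hright : ∑ q ∈ right, w q ≤ m * (2 * exp (-(9 / 2) * ε ^ 2 * m)) :=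
    (sum_image_le_of_nonneg fun q _ => hw0 q).trans_eq (by simp [w, hα, hβ])
  have hunion : ∑ q ∈ superRegularityTests ε, w q
      ≤ ∑ q ∈ pairs, w q + ∑ q ∈ left, w q + ∑ q ∈ right, w q :=
    (sum_union_le_sum_add_sum fun q _ => hw0 q).trans
      (add_le_add_left (sum_union_le_sum_add_sum fun q _ => hw0 q) _)
  linarith [four_pow_mul_exp_le hm, natCast_mul_exp_le hm]

theorem IsSuperRegularBip.exists_split {E : Finset (α × β)} {ε d : ℝ} {m : ℕ}
    (hα : Fintype.card α = m) (hβ : Fintype.card β = m) (hε : 0 < ε) (hm : 1 ≤ ε ^ 4 * m)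
    (hE : IsSuperRegularBip E ε d) :
    ∃ S₁ S₂ : Finset (α × β), S₁ ⊆ E ∧ S₂ ⊆ E ∧ Disjoint S₁ S₂ ∧
      IsSuperRegularBip S₁ (2 * ε) (d / 2) ∧ IsSuperRegularBip S₂ (2 * ε) (d / 2) := by
  obtain ⟨S, hSE, hS⟩ := exists_subset_forall_abs_card_filter_sub_half_le E
    (superRegularityTests ε) (fun q e => e.1 ∈ q.1 ∧ e.2 ∈ q.2)
    (fun q => 3 / 2 * ε * (#q.1 * #q.2)) (fun q => #q.1 * #q.2) (fun q _ => by positivity)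
    (fun q _ => by exact_mod_cast eBip_le_card_mul_card E q.1 q.2)
    ((sum_congr rfl fun q _ => by rw [neg_two_mul_sq_mul_div_self]; ring_nf).trans_lt
      (sum_superRegularityTests_lt_one hα hβ hε hm))
  refine ⟨S, E \ S, hSE, sdiff_subset, disjoint_sdiff,
    hE.of_forall_mem_superRegularityTests hε.le hS,
    hE.of_forall_mem_superRegularityTests hε.le fun q hq => ?_⟩
  exact (abs_card_filter_sdiff_sub_half E (fun e => e.1 ∈ q.1 ∧ e.2 ∈ q.2) hSE).trans_le
    (hS q hq)

end SuperRegular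

/-- an `(ε,d)`-super-regular pair splits into two edge-disjoint spanning
subgraphs, each `(2ε, d/2)`-super-regular. -/
theorem split_superregular_pair_into_two_superregular_subgraphs :
    ∃ c : ℝ, 0 < c ∧ c < 1 ∧
    ∀ d₀ : ℝ, 0 < d₀ → d₀ ≤ c →
    ∃ ε₀ : ℝ, 0 < ε₀ ∧
    ∀ ε : ℝ, 0 < ε → ε ≤ ε₀ →
    ∃ m₀ : ℕ, ∀ d : ℝ, d₀ ≤ d →
    ∀ m : ℕ, m₀ ≤ m →
    ∀ (α β : Type) [Fintype α] [Fintype β],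
      Fintype.card α = m → Fintype.card β = m →
    ∀ E : Finset (α × β),
      IsSuperRegularBip E ε d →
      ∃ S₁ S₂ : Finset (α × β),
        S₁ ⊆ E ∧ S₂ ⊆ E ∧ Disjoint S₁ S₂ ∧
        IsSuperRegularBip S₁ (2*ε) (d/2) ∧ IsSuperRegularBip S₂ (2*ε) (d/2) := by
  refine ⟨1 / 2, by norm_num, by norm_num, fun d₀ _ _ => ⟨1, one_pos, fun ε hε _ =>
    ⟨⌈(ε ^ 4)⁻¹⌉₊, fun d _ m hm α β _ _ hα hβ E hE => ?_⟩⟩⟩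
  have hm' : 1 ≤ ε ^ 4 * m := by
    rw [← inv_le_iff_one_le_mul₀' (by positivity)]
    exact Nat.ceil_le.mp hm
  exact hE.exists_split hα hβ hε hm'
end

section
/- Suppose 0 < ε ≤ β/100 ≤ 1/200 and m is sufficiently large. Let V₁, …, V_s (s ≥ 2) be pairwise disjoint vertex sets, each of size m, arranged in a cyclic order, and for each t = 1, …, s let S_t be a bipartite graph with vertex classes V_t and V_{t+1} (indices modulo s) which is ε-regular with density in [β − ε, β + ε]. Then there exist subsets V'_t ⊆ V_t of size m' := (1 − 4ε)m such that for every t the restriction of S_t to the pair (V'_t, V'_{t+1}) is (10ε, β)-super-regular. -/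
open scoped Classical

/-- Number of edges of `E ⊆ V × V` directed from `X` to `Y`. -/
noncomputable def ePair {V : Type*} (E : Finset (V × V)) (X Y : Finset V) : ℕ :=
  (E.filter fun e => e.1 ∈ X ∧ e.2 ∈ Y).card

/-- Density of `E` between `X` and `Y`. -/
noncomputable def densPair {V : Type*} (E : Finset (V × V)) (X Y : Finset V) : ℝ :=
  (ePair E X Y : ℝ) / ((X.card : ℝ) * (Y.card : ℝ))

/-- The pair `(A,B)` of the bipartite graph `E` is `[ε,ε']`-regular. -/
def IsRegularPair {V : Type*} (E : Finset (V × V)) (A B : Finset V) (ε ε' : ℝ) : Prop :=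
  ∀ X ⊆ A, ∀ Y ⊆ B,
    ε * (A.card : ℝ) ≤ (X.card : ℝ) → ε * (B.card : ℝ) ≤ (Y.card : ℝ) →
    |densPair E A B - densPair E X Y| < ε'

/-- Number of edges of `E` from the vertex `a` into the set `B`. -/
noncomputable def degToIn {V : Type*} (E : Finset (V × V)) (a : V) (B : Finset V) : ℕ :=
  (E.filter fun e => e.1 = a ∧ e.2 ∈ B).card

/-- Number of edges of `E` from the set `A` into the vertex `b`. -/
noncomputable def degFromIn {V : Type*} (E : Finset (V × V)) (A : Finset V) (b : V) : ℕ :=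
  (E.filter fun e => e.1 ∈ A ∧ e.2 = b).card

/-- The pair `(A,B)` of the bipartite graph `E` (restricted to `A × B`) is
`(ε,d)`-super-regular. -/
def IsSuperRegularPair {V : Type*} (E : Finset (V × V)) (A B : Finset V) (ε d : ℝ) : Prop :=
  (∀ X ⊆ A, ∀ Y ⊆ B,
      ε * (A.card : ℝ) ≤ (X.card : ℝ) → ε * (B.card : ℝ) ≤ (Y.card : ℝ) →
      d - ε ≤ densPair E X Y ∧ densPair E X Y ≤ d + ε) ∧
  (∀ a ∈ A, (d - ε) * (B.card : ℝ) ≤ (degToIn E a B : ℝ) ∧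
            (degToIn E a B : ℝ) ≤ (d + ε) * (B.card : ℝ)) ∧
  (∀ b ∈ B, (d - ε) * (A.card : ℝ) ≤ (degFromIn E A b : ℝ) ∧
            (degFromIn E A b : ℝ) ≤ (d + ε) * (A.card : ℝ))

/-! Regularity forces all but fewer than `2ε|A|` vertices of `A` to have degree into `B` within
`ε|B|` of `d(A,B)|B|`: the vertices of too low (or too high) degree would otherwise form a set of
size at least `ε|A|` whose density to `B` is off by at least `ε`. Discarding from each cluster the
vertices that are atypical towards either neighbouring cluster costs fewer than `4εm` vertices,
and trimming to exactly `⌊(1-4ε)m⌋` changes every degree by at most `5εm`. A set of relative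
size `10ε` in a trimmed cluster has relative size at least `ε` in the original one, so the
density bounds are inherited from regularity. -/

open Finset

variable {V : Type*}

lemma ePair_eq_sum_degToIn (E : Finset (V × V)) (X B : Finset V) :
    ePair E X B = ∑ a ∈ X, degToIn E a B := by
  unfold ePair degToIn
  rw [card_eq_sum_card_fiberwise (f := Prod.fst) (t := X) fun e he => (mem_filter.1 he).2.1]
  refine sum_congr rfl fun a ha => congrArg card ?_
  ext e
  simp only [mem_filter]
  constructor
  · rintro ⟨⟨he, -, hb⟩, rfl⟩; exact ⟨he, rfl, hb⟩
  · rintro ⟨he, rfl, hb⟩; exact ⟨⟨he, ha, hb⟩, rfl⟩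

lemma ePair_eq_densPair_mul (E : Finset (V × V)) {X Y : Finset V} (hX : X.Nonempty)
    (hY : Y.Nonempty) : (ePair E X Y : ℝ) = densPair E X Y * (#X * #Y) := by
  rw [densPair, div_mul_cancel₀]
  have := hX.card_pos; have := hY.card_pos
  positivity

lemma degToIn_eq_card_filter (E : Finset (V × V)) (a : V) (B : Finset V) :
    degToIn E a B = #{b ∈ B | (a, b) ∈ E} := by
  refine card_nbij' Prod.snd (fun b => (a, b)) ?_ ?_ ?_ ?_
  · rintro ⟨a', b⟩ he
    obtain ⟨hE, rfl, hb⟩ := mem_filter.1 he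
    exact mem_filter.2 ⟨hb, hE⟩
  · intro b hb
    obtain ⟨hb, he⟩ := mem_filter.1 hb
    exact mem_filter.2 ⟨he, rfl, hb⟩
  · intro e he
    obtain ⟨-, rfl, -⟩ := mem_filter.1 he
    rfl
  · intro b _
    rfl

lemma degToIn_mono (E : Finset (V × V)) (a : V) {B' B : Finset V} (h : B' ⊆ B) :
    degToIn E a B' ≤ degToIn E a B := by
  simp only [degToIn_eq_card_filter]
  exact card_le_card (filter_subset_filter _ h)

lemma degToIn_le_degToIn_add_card_sdiff (E : Finset (V × V)) (a : V) (B' B : Finset V) :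
    degToIn E a B ≤ degToIn E a B' + #(B \ B') := by
  simp only [degToIn_eq_card_filter]
  refine (card_le_card fun b hb => ?_).trans (card_union_le _ _)
  obtain ⟨hbB, hbE⟩ := mem_filter.1 hb
  by_cases hbB' : b ∈ B'
  · exact mem_union_left _ (mem_filter.2 ⟨hbB', hbE⟩)
  · exact mem_union_right _ (mem_sdiff.2 ⟨hbB, hbB'⟩)

def reverseEdges (E : Finset (V × V)) : Finset (V × V) :=
  E.map (Equiv.prodComm V V).toEmbedding

lemma ePair_reverseEdges (E : Finset (V × V)) (X Y : Finset V) :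
    ePair (reverseEdges E) Y X = ePair E X Y := by
  rw [ePair, ePair, reverseEdges, filter_map, card_map]
  congr 1
  exact filter_congr fun e _ => and_comm

lemma densPair_reverseEdges (E : Finset (V × V)) (X Y : Finset V) :
    densPair (reverseEdges E) Y X = densPair E X Y := by
  rw [densPair, densPair, ePair_reverseEdges, mul_comm]

lemma IsRegularPair.reverse {E : Finset (V × V)} {A B : Finset V} {ε ε' : ℝ}
    (h : IsRegularPair E A B ε ε') : IsRegularPair (reverseEdges E) B A ε ε' := by
  intro Y hY X hX hYc hXc
  simpa only [densPair_reverseEdges] using h X hX Y hY hXc hYc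

lemma degToIn_reverseEdges (E : Finset (V × V)) (A : Finset V) (b : V) :
    degToIn (reverseEdges E) b A = degFromIn E A b := by
  rw [degToIn, degFromIn, reverseEdges, filter_map, card_map]
  congr 1
  exact filter_congr fun e _ => and_comm

lemma card_filter_lt_of_forall_exists_not {α : Type*} (A : Finset α) (P : α → Prop)
    [DecidablePred P] (c : ℝ) (h : ∀ X ⊆ A, c ≤ #X → ∃ a ∈ X, ¬ P a) :
    (#(A.filter P) : ℝ) < c := by
  by_contra! hc
  obtain ⟨a, ha, hPa⟩ := h _ (filter_subset P A) hc
  exact hPa (mem_filter.1 ha).2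

section Regular

variable {E : Finset (V × V)} {A B X : Finset V} {ε : ℝ}

lemma IsRegularPair.abs_densPair_sub_lt (hreg : IsRegularPair E A B ε ε) (hX : X ⊆ A)
    (hXc : ε * #A ≤ #X) (hε : ε ≤ 1) : |densPair E A B - densPair E X B| < ε :=
  hreg X hX B Subset.rfl hXc (mul_le_of_le_one_left (Nat.cast_nonneg _) hε)

lemma IsRegularPair.exists_lt_degToIn (hreg : IsRegularPair E A B ε ε) (hX : X ⊆ A)
    (hXc : ε * #A ≤ #X) (hX₀ : X.Nonempty) (hB : B.Nonempty) (hε : ε ≤ 1) :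
    ∃ a ∈ X, (densPair E A B - ε) * #B < degToIn E a B := by
  have hdens := (abs_lt.1 (hreg.abs_densPair_sub_lt hX hXc hε)).2
  have hpos : (0 : ℝ) < #X * #B := by have := hX₀.card_pos; have := hB.card_pos; positivity
  apply exists_lt_of_sum_lt
  rw [sum_const, nsmul_eq_mul, ← Nat.cast_sum, ← ePair_eq_sum_degToIn,
    ePair_eq_densPair_mul E hX₀ hB]
  nlinarith

lemma IsRegularPair.exists_degToIn_lt (hreg : IsRegularPair E A B ε ε) (hX : X ⊆ A)
    (hXc : ε * #A ≤ #X) (hX₀ : X.Nonempty) (hB : B.Nonempty) (hε : ε ≤ 1) :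
    ∃ a ∈ X, degToIn E a B < (densPair E A B + ε) * #B := by
  have hdens := (abs_lt.1 (hreg.abs_densPair_sub_lt hX hXc hε)).1
  have hpos : (0 : ℝ) < #X * #B := by have := hX₀.card_pos; have := hB.card_pos; positivity
  apply exists_lt_of_sum_lt
  rw [sum_const, nsmul_eq_mul, ← Nat.cast_sum, ← ePair_eq_sum_degToIn,
    ePair_eq_densPair_mul E hX₀ hB]
  nlinarith

variable (E A B ε) in
noncomputable def degDeviants : Finset V :=
  A.filter fun a => (degToIn E a B : ℝ) < (densPair E A B - ε) * #B ∨
    (densPair E A B + ε) * #B < degToIn E a B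

lemma IsRegularPair.card_degDeviants_lt (hreg : IsRegularPair E A B ε ε) (hA : A.Nonempty)
    (hB : B.Nonempty) (hε : 0 < ε) (hε₁ : ε ≤ 1) :
    (#(degDeviants E A B ε) : ℝ) < 2 * ε * #A := by
  have hεA : (0 : ℝ) < ε * #A := by have := hA.card_pos; positivity
  have hX₀ : ∀ X : Finset V, ε * #A ≤ #X → X.Nonempty := fun X hXc =>
    card_pos.1 (by exact_mod_cast hεA.trans_le hXc)
  have hlow := card_filter_lt_of_forall_exists_not A
    (fun a => (degToIn E a B : ℝ) < (densPair E A B - ε) * #B) (ε * #A) fun X hX hXc =>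
      (hreg.exists_lt_degToIn hX hXc (hX₀ X hXc) hB hε₁).imp
        fun _ ⟨ha, h⟩ => ⟨ha, h.not_gt⟩
  have hhigh := card_filter_lt_of_forall_exists_not A
    (fun a => (densPair E A B + ε) * #B < degToIn E a B) (ε * #A) fun X hX hXc =>
      (hreg.exists_degToIn_lt hX hXc (hX₀ X hXc) hB hε₁).imp
        fun _ ⟨ha, h⟩ => ⟨ha, h.not_gt⟩
  have hunion : (#(degDeviants E A B ε) : ℝ) ≤
      #(A.filter fun a => (degToIn E a B : ℝ) < (densPair E A B - ε) * #B) +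
      #(A.filter fun a => (densPair E A B + ε) * #B < degToIn E a B) := by
    rw [degDeviants, filter_or]
    exact_mod_cast card_union_le _ _
  linarith

end Regular

section SuperRegular

variable {E : Finset (V × V)} {A B A' B' : Finset V} {ε β : ℝ}

lemma degToIn_bounds_of_not_mem_degDeviants {a : V} (ha : a ∈ A)
    (hgood : a ∉ degDeviants E A B ε) (hB' : B' ⊆ B) (hB'c : (1 - 5 * ε) * #B ≤ #B')
    (hd : β - ε ≤ densPair E A B ∧ densPair E A B ≤ β + ε)
    (hε : 0 < ε) (hεβ : ε ≤ β / 100) (hβ : β ≤ 1 / 2) :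
    (β - 10 * ε) * #B' ≤ degToIn E a B' ∧
      (degToIn E a B' : ℝ) ≤ (β + 10 * ε) * #B' := by
  simp only [degDeviants, mem_filter, not_and, not_or, not_lt] at hgood
  obtain ⟨hlo, hhi⟩ := hgood ha
  have hmono : (degToIn E a B' : ℝ) ≤ degToIn E a B := by exact_mod_cast degToIn_mono E a hB'
  have hsdiff : (degToIn E a B : ℝ) ≤ degToIn E a B' + (#B - #B') := by
    have := degToIn_le_degToIn_add_card_sdiff E a B' B
    rw [card_sdiff_of_subset hB'] at this
    rw [← Nat.cast_sub (card_le_card hB')]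
    exact_mod_cast this
  have hB'B : (#B' : ℝ) ≤ #B := by exact_mod_cast card_le_card hB'
  have hB0 : (0 : ℝ) ≤ #B := Nat.cast_nonneg _
  constructor
  · nlinarith [mul_le_mul_of_nonneg_right hd.1 hB0,
      mul_le_mul_of_nonneg_left hB'c (by linarith : 0 ≤ 1 - β + 10 * ε),
      mul_nonneg (mul_nonneg hε.le (by linarith : 0 ≤ 3 - 50 * ε)) hB0]
  · nlinarith [mul_le_mul_of_nonneg_right hd.2 hB0,
      mul_le_mul_of_nonneg_left hB'c (by linarith : 0 ≤ β + 10 * ε),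
      mul_nonneg (mul_nonneg hε.le (by linarith : 0 ≤ 8 - 5 * β - 50 * ε)) hB0]

lemma mul_card_le_of_ten_mul_card_le (hc : (1 - 5 * ε) * #A ≤ #A') (hε : 0 < ε)
    (hε' : ε ≤ 1 / 200) {n : ℝ} (hn : 10 * ε * #A' ≤ n) : ε * #A ≤ n := by
  nlinarith [mul_le_mul_of_nonneg_left hc (by linarith : 0 ≤ 10 * ε),
    mul_nonneg (mul_nonneg hε.le (by linarith : 0 ≤ 9 - 50 * ε))
      (Nat.cast_nonneg (α := ℝ) #A)]

theorem IsRegularPair.isSuperRegularPair_of_disjoint_degDeviants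
    (hreg : IsRegularPair E A B ε ε) (hA' : A' ⊆ A) (hB' : B' ⊆ B)
    (hA'c : (1 - 5 * ε) * #A ≤ #A') (hB'c : (1 - 5 * ε) * #B ≤ #B')
    (hA'good : Disjoint A' (degDeviants E A B ε))
    (hB'good : Disjoint B' (degDeviants (reverseEdges E) B A ε))
    (hd : β - ε ≤ densPair E A B ∧ densPair E A B ≤ β + ε)
    (hε : 0 < ε) (hεβ : ε ≤ β / 100) (hβ : β ≤ 1 / 2) :
    IsSuperRegularPair E A' B' (10 * ε) β := by
  have hε' : ε ≤ 1 / 200 := by linarith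
  refine ⟨fun X hX Y hY hXc hYc => ?_, fun a ha => ?_, fun b hb => ?_⟩
  · have h := abs_lt.1 (hreg X (hX.trans hA') Y (hY.trans hB')
      (mul_card_le_of_ten_mul_card_le hA'c hε hε' hXc)
      (mul_card_le_of_ten_mul_card_le hB'c hε hε' hYc))
    constructor <;> linarith
  · exact degToIn_bounds_of_not_mem_degDeviants (hA' ha) (disjoint_left.1 hA'good ha) hB' hB'c
      hd hε hεβ hβ
  · rw [← densPair_reverseEdges] at hd
    simpa only [degToIn_reverseEdges] using degToIn_bounds_of_not_mem_degDeviants (hB' hb)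
      (disjoint_left.1 hB'good hb) hA' hA'c hd hε hεβ hβ

end SuperRegular

lemma one_sub_five_mul_le_floor {ε : ℝ} {m : ℕ} (hεm : 1 ≤ ε * m) :
    (1 - 5 * ε) * m ≤ ⌊(1 - 4 * ε) * m⌋₊ := by
  linarith [Nat.lt_floor_add_one ((1 - 4 * ε) * m)]

lemma exists_subset_disjoint_disjoint_card_eq_floor {C D₁ D₂ : Finset V} {ε : ℝ}
    (hD₁ : (#D₁ : ℝ) < 2 * ε * #C) (hD₂ : (#D₂ : ℝ) < 2 * ε * #C) :
    ∃ W ⊆ C, Disjoint W D₁ ∧ Disjoint W D₂ ∧ #W = ⌊(1 - 4 * ε) * #C⌋₊ := by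
  have hsplit : (#C : ℝ) ≤ #(C \ (D₁ ∪ D₂)) + #D₁ + #D₂ := by
    exact_mod_cast card_le_card_sdiff_add_card.trans (by grw [card_union_le]; rw [add_assoc])
  obtain ⟨W, hW, hWc⟩ := exists_subset_card_eq (Nat.floor_le_of_le (by linarith) :
    ⌊(1 - 4 * ε) * #C⌋₊ ≤ #(C \ (D₁ ∪ D₂)))
  have hWD := disjoint_union_right.1 (disjoint_of_subset_left hW sdiff_disjoint)
  exact ⟨W, hW.trans sdiff_subset, hWD.1, hWD.2, hWc⟩

/-- along a cyclic sequence of ε-regular bipartite pairs of density ≈ β one can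
delete `4εm` vertices from each cluster so that every pair becomes `(10ε, β)`-super-regular. -/
theorem superregular_subclusters_on_cycle :
    ∀ β ε : ℝ, 0 < ε → ε ≤ β / 100 → β / 100 ≤ 1 / 200 →
    ∃ m₀ : ℕ, ∀ m : ℕ, m₀ ≤ m →
    ∀ s : ℕ, 2 ≤ s →
    ∀ (V : Type) [DecidableEq V],
    ∀ Vt : ZMod s → Finset V,
      (∀ t u : ZMod s, t ≠ u → Disjoint (Vt t) (Vt u)) →
      (∀ t, (Vt t).card = m) →
    ∀ S : ZMod s → Finset (V × V),
      (∀ t, ∀ e ∈ S t, e.1 ∈ Vt t ∧ e.2 ∈ Vt (t+1)) →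
      (∀ t, IsRegularPair (S t) (Vt t) (Vt (t+1)) ε ε) →
      (∀ t, β - ε ≤ densPair (S t) (Vt t) (Vt (t+1)) ∧
            densPair (S t) (Vt t) (Vt (t+1)) ≤ β + ε) →
      ∃ V' : ZMod s → Finset V,
        (∀ t, V' t ⊆ Vt t) ∧
        (∀ t, (V' t).card = ⌊(1 - 4*ε) * (m : ℝ)⌋₊) ∧
        (∀ t, IsSuperRegularPair (S t) (V' t) (V' (t+1)) (10*ε) β) := by
  intro β ε hε hεβ hβ
  refine ⟨⌈ε⁻¹⌉₊, fun m hm s _ V _ Vt _ hcard S _ hreg hdens => ?_⟩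
  have hεm : 1 ≤ ε * m := (inv_le_iff_one_le_mul₀' hε).1 (Nat.ceil_le.1 hm)
  have hne : ∀ t, (Vt t).Nonempty := fun t => card_pos.1 <| hcard t ▸ Nat.pos_of_ne_zero
    (by rintro rfl; norm_num at hεm)
  have hgood : ∀ t, ∃ W ⊆ Vt t, Disjoint W (degDeviants (S t) (Vt t) (Vt (t + 1)) ε) ∧
      Disjoint W (degDeviants (reverseEdges (S (t - 1))) (Vt t) (Vt (t - 1)) ε) ∧
      #W = ⌊(1 - 4 * ε) * (m : ℝ)⌋₊ := fun t => by
    rw [← hcard t]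
    refine exists_subset_disjoint_disjoint_card_eq_floor
      ((hreg t).card_degDeviants_lt (hne t) (hne _) hε (by linarith)) ?_
    simpa only [sub_add_cancel] using
      (hreg (t - 1)).reverse.card_degDeviants_lt (hne _) (hne _) hε (by linarith)
  choose V' hV'sub hnext hprev hV'card using hgood
  have hV'c : ∀ t, (1 - 5 * ε) * #(Vt t) ≤ #(V' t) := fun t => by
    rw [hcard, hV'card]; exact one_sub_five_mul_le_floor hεm
  refine ⟨V', hV'sub, hV'card, fun t => ?_⟩
  have hprev' := hprev (t + 1)
  rw [add_sub_cancel_right] at hprev'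
  exact (hreg t).isSuperRegularPair_of_disjoint_degDeviants (hV'sub t) (hV'sub (t + 1))
    (hV'c t) (hV'c (t + 1)) (hnext t) hprev' (hdens t) hε hεβ (by linarith)
end

section
/- Suppose 0 < 1/n ≪ ε', ε ≪ d₀ ≤ d₁ ≪ 1. If (A,B) is an [ε, ε']-regular bipartite pair of density d₁ with |A| = |B| = n, then (A,B) contains a subgraph H whose maximum degree is at most d₀n and whose average degree is at least d₀n/8, i.e., e(H) ≥ d₀n²/8. -/
open scoped Classical

lemma sum_degL {α β : Type*} [Fintype α] (H : Finset (α × β)) :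
    ∑ a : α, degL H a = H.card := by
  rw [Finset.card_eq_sum_card_fiberwise (f := Prod.fst) (t := Finset.univ)
    (fun x _ => Finset.mem_univ _)]
  rfl

lemma sum_degR {α β : Type*} [Fintype β] (H : Finset (α × β)) :
    ∑ b : β, degR H b = H.card := by
  rw [Finset.card_eq_sum_card_fiberwise (f := Prod.snd) (t := Finset.univ)
    (fun x _ => Finset.mem_univ _)]
  rfl

lemma degL_insert_le {α β : Type*} (H : Finset (α × β)) (e : α × β) (a : α) :
    degL (insert e H) a ≤ degL H a + 1 := by
  unfold degL
  rw [Finset.filter_insert]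
  split
  · exact (Finset.card_insert_le _ _)
  · omega

lemma degL_insert_ne {α β : Type*} (H : Finset (α × β)) (e : α × β) (a : α)
    (h : e.1 ≠ a) : degL (insert e H) a = degL H a := by
  unfold degL
  rw [Finset.filter_insert, if_neg h]

lemma degR_insert_le {α β : Type*} (H : Finset (α × β)) (e : α × β) (b : β) :
    degR (insert e H) b ≤ degR H b + 1 := by
  unfold degR
  rw [Finset.filter_insert]
  split
  · exact (Finset.card_insert_le _ _)
  · omega

lemma degR_insert_ne {α β : Type*} (H : Finset (α × β)) (e : α × β) (b : β)
    (h : e.2 ≠ b) : degR (insert e H) b = degR H b := by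
  unfold degR
  rw [Finset.filter_insert, if_neg h]

/-- saturated-vertex counting lemma, done once for each side via this generic form -/
lemma sat_card_bound {γ : Type*} [Fintype γ] (deg : γ → ℕ) (M : ℝ) (hM : 0 ≤ M)
    (tot : ℝ) (htot : (∑ x : γ, (deg x : ℝ)) ≤ tot)
    (Xs : Finset γ) (hXs : ∀ x ∈ Xs, M ≤ (deg x : ℝ)) :
    (Xs.card : ℝ) * M ≤ tot := by
  have h1 : (Xs.card : ℝ) * M ≤ ∑ x ∈ Xs, (deg x : ℝ) := by
    have := Finset.card_nsmul_le_sum Xs (fun x => (deg x : ℝ)) M hXs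
    simpa [nsmul_eq_mul] using this
  have h2 : ∑ x ∈ Xs, (deg x : ℝ) ≤ ∑ x : γ, (deg x : ℝ) :=
    Finset.sum_le_sum_of_subset_of_nonneg (Finset.subset_univ _)
      (fun i _ _ => by positivity)
  linarith

set_option maxHeartbeats 2000000 in
/-- an `[ε,ε']`-regular pair of density `d₁` contains a subgraph of maximum
degree at most `d₀n` with at least `d₀n²/8` edges (i.e. average degree at least `d₀n/8`). -/
theorem bounded_degree_subgraph_of_regular_pair :
    ∃ c : ℝ, 0 < c ∧ c < 1 ∧
    ∀ d₁ : ℝ, 0 < d₁ → d₁ ≤ c →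
    ∀ d₀ : ℝ, 0 < d₀ → d₀ ≤ d₁ →
    ∃ ε₁ : ℝ, 0 < ε₁ ∧
    ∀ ε ε' : ℝ, 0 < ε → ε ≤ ε₁ → 0 < ε' → ε' ≤ ε₁ →
    ∃ n₀ : ℕ, ∀ n : ℕ, n₀ ≤ n →
    ∀ (α β : Type) [Fintype α] [Fintype β],
      Fintype.card α = n → Fintype.card β = n →
    ∀ E : Finset (α × β),
      IsRegularBip E ε ε' → densBip E Finset.univ Finset.univ = d₁ →
      ∃ H ⊆ E,
        (∀ a : α, (degL H a : ℝ) ≤ d₀ * (n : ℝ)) ∧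
        (∀ b : β, (degR H b : ℝ) ≤ d₀ * (n : ℝ)) ∧
        d₀ * (n : ℝ)^2 / 8 ≤ (H.card : ℝ) := by
  refine ⟨1/2, by norm_num, by norm_num, ?_⟩
  intro d₁ hd₁ hd₁c d₀ hd₀ hd₀₁
  refine ⟨d₀/4, by positivity, ?_⟩
  intro ε ε' hε hεle hε' hε'le
  refine ⟨⌈(4:ℝ)/d₀⌉₊, ?_⟩
  intro n hn α β _ _ hcα hcβ E hreg hdens
  have hd₀half : d₀ ≤ 1/2 := hd₀₁.trans hd₁c
  have hnn : (4:ℝ)/d₀ ≤ n := le_trans (Nat.le_ceil _) (by exact_mod_cast hn)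
  have hd0n : (4:ℝ) ≤ d₀ * n := by
    rw [div_le_iff₀ hd₀] at hnn; linarith
  have hnpos : (0:ℝ) < n := by nlinarith
  set P : Finset (α × β) → Prop := fun H =>
    (∀ a : α, (degL H a : ℝ) ≤ d₀ * n) ∧ (∀ b : β, (degR H b : ℝ) ≤ d₀ * n) with hP
  have hPempty : P (∅ : Finset (α × β)) := by
    constructor <;> intro x <;> simp [degL, degR] <;> positivity
  obtain ⟨H, hHmem, hHmax⟩ :=
    Finset.exists_max_image (E.powerset.filter P) Finset.card
      ⟨∅, Finset.mem_filter.mpr ⟨Finset.mem_powerset.mpr (Finset.empty_subset _), hPempty⟩⟩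
  rw [Finset.mem_filter, Finset.mem_powerset] at hHmem
  obtain ⟨hHE, hPH⟩ := hHmem
  refine ⟨H, hHE, hPH.1, hPH.2, ?_⟩
  by_contra hlt
  push_neg at hlt
  -- saturated / unsaturated sets
  set X' : Finset α := Finset.univ.filter (fun a => (degL H a : ℝ) + 1 ≤ d₀ * n) with hX'
  set Y' : Finset β := Finset.univ.filter (fun b => (degR H b : ℝ) + 1 ≤ d₀ * n) with hY'
  set Xs : Finset α := Finset.univ.filter (fun a => ¬ ((degL H a : ℝ) + 1 ≤ d₀ * n)) with hXs
  set Ys : Finset β := Finset.univ.filter (fun b => ¬ ((degR H b : ℝ) + 1 ≤ d₀ * n)) with hYs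
  have hsumL : (∑ a : α, (degL H a : ℝ)) = (H.card : ℝ) := by
    rw [← Nat.cast_sum, sum_degL]
  have hsumR : (∑ b : β, (degR H b : ℝ)) = (H.card : ℝ) := by
    rw [← Nat.cast_sum, sum_degR]
  have hM : (0:ℝ) ≤ d₀ * n - 1 := by linarith
  have hXsb : (Xs.card : ℝ) * (d₀ * n - 1) ≤ (H.card : ℝ) := by
    refine sat_card_bound _ _ hM _ (le_of_eq hsumL) Xs ?_
    intro x hx
    rw [hXs, Finset.mem_filter] at hx
    push_neg at hx
    linarith [hx.2]
  have hYsb : (Ys.card : ℝ) * (d₀ * n - 1) ≤ (H.card : ℝ) := by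
    refine sat_card_bound _ _ hM _ (le_of_eq hsumR) Ys ?_
    intro x hx
    rw [hYs, Finset.mem_filter] at hx
    push_neg at hx
    linarith [hx.2]
  -- cardinality of unsaturated sets
  have hXsplit : X'.card + Xs.card = n := by
    rw [hX', hXs, Finset.card_filter_add_card_filter_not, Finset.card_univ, hcα]
  have hYsplit : Y'.card + Ys.card = n := by
    rw [hY', hYs, Finset.card_filter_add_card_filter_not, Finset.card_univ, hcβ]
  have hXsmall : (Xs.card : ℝ) < n / 6 := by
    nlinarith [hlt, hXsb, hd0n, hnpos, hd₀,
      mul_nonneg (Nat.cast_nonneg (α := ℝ) Xs.card) (by linarith : (0:ℝ) ≤ d₀ * n / 4 - 1),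
      mul_pos hd₀ hnpos]
  have hYsmall : (Ys.card : ℝ) < n / 6 := by
    nlinarith [hlt, hYsb, hd0n, hnpos, hd₀,
      mul_nonneg (Nat.cast_nonneg (α := ℝ) Ys.card) (by linarith : (0:ℝ) ≤ d₀ * n / 4 - 1),
      mul_pos hd₀ hnpos]
  have hX'big : (5:ℝ)/6 * n < X'.card := by
    have : (X'.card : ℝ) + Xs.card = n := by exact_mod_cast hXsplit
    linarith
  have hY'big : (5:ℝ)/6 * n < Y'.card := by
    have : (Y'.card : ℝ) + Ys.card = n := by exact_mod_cast hYsplit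
    linarith
  -- F : edges between unsaturated sets, all must be in H by maximality
  set F : Finset (α × β) := E.filter (fun e => e.1 ∈ X' ∧ e.2 ∈ Y') with hF
  have hFH : F ⊆ H := by
    intro e heF
    by_contra heH
    rw [hF, Finset.mem_filter] at heF
    obtain ⟨heE, he1, he2⟩ := heF
    rw [hX', Finset.mem_filter] at he1
    rw [hY', Finset.mem_filter] at he2
    have hsub : insert e H ⊆ E := Finset.insert_subset heE hHE
    have hPH' : P (insert e H) := by
      constructor
      · intro a
        by_cases h : e.1 = a
        · subst h
          have := degL_insert_le H e e.1
          have h2 := he1.2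
          push_cast
          calc (degL (insert e H) e.1 : ℝ) ≤ (degL H e.1 : ℝ) + 1 := by exact_mod_cast this
            _ ≤ d₀ * n := h2
        · rw [degL_insert_ne H e a h]; exact hPH.1 a
      · intro b
        by_cases h : e.2 = b
        · subst h
          have := degR_insert_le H e e.2
          calc (degR (insert e H) e.2 : ℝ) ≤ (degR H e.2 : ℝ) + 1 := by exact_mod_cast this
            _ ≤ d₀ * n := he2.2
        · rw [degR_insert_ne H e b h]; exact hPH.2 b
    have hmem : insert e H ∈ E.powerset.filter P := by
      rw [Finset.mem_filter, Finset.mem_powerset]; exact ⟨hsub, hPH'⟩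
    have := hHmax _ hmem
    rw [Finset.card_insert_of_notMem heH] at this
    omega
  have hFcard : (F.card : ℝ) ≤ (H.card : ℝ) := by exact_mod_cast Finset.card_le_card hFH
  -- regularity gives many edges between X' and Y'
  have h1 : ε * (n:ℝ) ≤ (d₀/4) * n := mul_le_mul_of_nonneg_right hεle hnpos.le
  have h2 : (d₀/4) * (n:ℝ) ≤ (1/8) * n :=
    mul_le_mul_of_nonneg_right (by linarith : d₀/4 ≤ (1:ℝ)/8) hnpos.le
  have hεX : ε * (Fintype.card α : ℝ) ≤ (X'.card : ℝ) := by
    rw [hcα]; linarith [hX'big]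
  have hεY : ε * (Fintype.card β : ℝ) ≤ (Y'.card : ℝ) := by
    rw [hcβ]; linarith [hY'big]
  have hregXY := hreg X' Y' hεX hεY
  rw [hdens] at hregXY
  have hdenslb : d₁ - ε' < densBip E X' Y' := by
    have := abs_lt.mp hregXY
    linarith [this.2]
  have hdlb : (3:ℝ)/4 * d₀ < densBip E X' Y' := by
    have : ε' ≤ d₀ / 4 := hε'le
    linarith
  have hX'pos : (0:ℝ) < X'.card := by linarith
  have hY'pos : (0:ℝ) < Y'.card := by linarith
  have heF : (eBip E X' Y' : ℝ) = F.card := by rw [hF]; rfl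
  have hdens' : densBip E X' Y' = (F.card : ℝ) / ((X'.card : ℝ) * (Y'.card : ℝ)) := by
    rw [densBip, heF]
  have hFlb : (3:ℝ)/4 * d₀ * ((X'.card : ℝ) * (Y'.card : ℝ)) < (F.card : ℝ) := by
    rw [hdens'] at hdlb
    have hpos : (0:ℝ) < (X'.card : ℝ) * (Y'.card : ℝ) := by positivity
    calc (3:ℝ)/4 * d₀ * ((X'.card : ℝ) * (Y'.card : ℝ))
        < ((F.card : ℝ) / ((X'.card : ℝ) * (Y'.card : ℝ))) * ((X'.card : ℝ) * (Y'.card : ℝ)) :=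
          by exact mul_lt_mul_of_pos_right hdlb hpos
      _ = (F.card : ℝ) := by field_simp
  -- contradiction
  have hXY : (25:ℝ)/36 * (n:ℝ)^2 ≤ (X'.card : ℝ) * (Y'.card : ℝ) := by
    nlinarith [hX'big, hY'big, hnpos]
  have hmul : d₀ * ((25:ℝ)/36 * (n:ℝ)^2) ≤ d₀ * ((X'.card : ℝ) * (Y'.card : ℝ)) :=
    mul_le_mul_of_nonneg_left hXY hd₀.le
  linarith [hFlb, hmul, hFcard, hlt]
end

section
/- Suppose 0 < 1/m ≪ ε ≪ γ < 1 (ε sufficiently small in terms of γ, m sufficiently large in terms of ε). Let G be an oriented graph on n ≥ 2m vertices, and let U and V be disjoint subsets of the vertex set with |U| = |V| = m such that: whenever S ⊆ U and T ⊆ V satisfy |S|, |T| ≥ εm, the number of edges of G from S to T is at least γ|S||T|/2. Let P = u₁u₂…u_k be a directed path in G with u₁ ∈ V and u_k ∈ U. Let X be the set of those inneighbours u_i of u₁ lying on P with u_i ∈ U and u_{i+1} ∈ V, and let Y be the set of those outneighbours u_i of u_k lying on P with u_i ∈ V and u_{i−1} ∈ U. Suppose |X|, |Y| ≥ γm. Then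 G contains a directed cycle C whose vertex set is exactly the vertex set of P, such that |E(C) \ E(P)| ≤ 5 and E(P) \ E(C) consists only of edges from X to X⁺ and edges from Y⁻ to Y, where X⁺ is the set of successors on P of the vertices of X and Y⁻ is the set of predecessors on P of the vertices of Y. -/
/-!
Index a path edge `(u i, u (i + 1))` by its tail `i`. The rotation edges of type `X` (with
`u i → u 0`) and of type `Y` (with `u (k-1) → u (i + 1)`) all run from `U` to `V`, so the
expansion hypothesis yields, between any two sets of at least `εm` of them, a jump
`u a → u (b + 1)` from the tail of one to the head of another.

Split `X` at its median `t`. If at least `εm` edges of `Y` lie before `t`, a jump from such an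
`a` to some `b ≥ t` in `X` gives the cycle `u 0 … u a, u (b+1) … u (k-1), u (a+1) … u b`, with
three new edges. Otherwise most of `Y` lies after `t`; halving the early part of `X` and the late
part of `Y` gives `X₁ < X₂ < Y₁ < Y₂`. All but fewer than `εm` indices of `X₁` receive a jump
from `Y₁`, all but fewer than `εm` of `Y₂` send one to `X₂`, and a jump `i₁ → a₂` between these
good indices closes the cycle `u 0 … u i₁, u (a₂+1) … u (k-1), u (a₁+1) … u a₂,
u (i₂+1) … u a₁, u (i₁+1) … u i₂`, with five new edges. The counting only needs
`8⌈εm⌉ ≤ γm`, which `ε ≤ γ/16` and `εm ≥ 1` guarantee.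
-/

open scoped Classical
open Finset Equiv

namespace List

theorem formPerm_apply_of_infix {α : Type*} [DecidableEq α] {l : List α} {x y : α}
    (hl : l.Nodup) (h : [x, y] <:+: l) : l.formPerm x = y := by
  obtain ⟨s, t, rfl⟩ := h
  have hmod : (s.length + 1) % (s ++ [x, y] ++ t).length = s.length + 1 :=
    Nat.mod_eq_of_lt (by simp)
  have h := formPerm_apply_getElem _ hl s.length (by simp)
  simp only [hmod] at h
  simpa using h

theorem Ico.pair_infix {s e x : ℕ} (hsx : s ≤ x) (hxe : x + 1 < e) : [x, x + 1] <:+: Ico s e :=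
  ⟨Ico s x, Ico (x + 2) e, by
    rw [← Ico.append_consecutive hsx (by omega : x ≤ e), Ico.eq_cons (by omega : x < e),
      Ico.eq_cons hxe]
    simp⟩

theorem Ico.pair_infix_append {s x e y e' : ℕ} (hsx : s ≤ x) (hxe : x + 1 = e) (hye : y < e') :
    [x, y] <:+: Ico s e ++ Ico y e' :=
  ⟨Ico s x, Ico (y + 1) e', by rw [← hxe, Ico.succ_top hsx, Ico.eq_cons hye]; simp⟩

end List

def pathEdges {α : Type*} (u : ℕ → α) (k : ℕ) : Set (α × α) :=
  {e | ∃ i, i + 1 < k ∧ e = (u i, u (i + 1))}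

section ClosingPaths

variable {α : Type*} [Fintype α] [DecidableEq α]

theorem formPerm_map_of_perm_range {u : ℕ → α} {k : ℕ} {l : List ℕ}
    (hinj : Set.InjOn u (Set.Iio k)) (hl : l.Perm (List.range k)) (hk : 2 ≤ k) :
    (l.map u).formPerm.IsCycle ∧ (l.map u).formPerm.support = (range k).image u ∧
      ∀ l' x y, l.IsRotated l' → [x, y] <:+: l' → (l.map u).formPerm (u x) = u y := by
  have hmem : ∀ x ∈ l, x ∈ Set.Iio k := fun x hx => by simpa using hl.subset hx
  have hnd : (l.map u).Nodup :=
    (hl.nodup_iff.2 List.nodup_range).map_on fun x hx y hy => hinj (hmem x hx) (hmem y hy)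
  have hlen : (l.map u).length = k := by simp [hl.length_eq]
  refine ⟨List.isCycle_formPerm hnd (by omega), ?_, fun l' x y hr hxy => ?_⟩
  · rw [List.support_formPerm_of_nodup _ hnd fun x hx => by
      have := congrArg List.length hx; simp only [hlen, List.length_singleton] at this; omega,
      List.toFinset_eq_of_perm _ _ (hl.map u)]
    ext; simp
  · rw [List.formPerm_eq_of_isRotated hnd (hr.map u)]
    exact List.formPerm_apply_of_infix ((hr.map u).nodup_iff.1 hnd) (hxy.map u)

def cycleEdges (σ : Perm α) : Set (α × α) := {e | e.1 ∈ σ.support ∧ σ e.1 = e.2}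

structure ClosesPath (G : α → α → Prop) (u : ℕ → α) (k : ℕ) (J : Finset ℕ) (σ : Perm α) : Prop where
  isCycle : σ.IsCycle
  support_eq : σ.support = (range k).image u
  apply_eq_succ : ∀ x, x + 1 < k → x ∉ J → σ (u x) = u (x + 1)
  adj_apply : ∀ x ∈ insert (k - 1) J, G (u x) (σ (u x))

namespace ClosesPath

variable {G : α → α → Prop} {u : ℕ → α} {k : ℕ} {J : Finset ℕ} {σ : Perm α}

theorem adj (hσ : ClosesPath G u k J σ) (hpath : ∀ i, i + 1 < k → G (u i) (u (i + 1))) :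
    ∀ v ∈ σ.support, G v (σ v) := by
  rw [hσ.support_eq]
  rintro _ hv
  obtain ⟨x, hx, rfl⟩ := mem_image.1 hv
  by_cases hxJ : x ∈ insert (k - 1) J
  · exact hσ.adj_apply x hxJ
  · rw [mem_insert, not_or] at hxJ
    have hxk : x + 1 < k := by simp at hx; omega
    rw [hσ.apply_eq_succ x hxk hxJ.2]
    exact hpath x hxk

theorem ncard_cycleEdges_diff_le (hσ : ClosesPath G u k J σ) :
    (cycleEdges σ \ pathEdges u k).ncard ≤ #J + 1 := by
  have hsub : cycleEdges σ \ pathEdges u k ⊆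
      ↑((insert (k - 1) J).image fun x => (u x, σ (u x))) := by
    rintro ⟨v, w⟩ ⟨⟨hv, hvw⟩, hnew⟩
    dsimp only at hv hvw
    subst hvw
    rw [hσ.support_eq] at hv
    obtain ⟨x, hx, rfl⟩ := mem_image.1 hv
    refine mem_image.2 ⟨x, ?_, rfl⟩
    by_contra hxJ
    rw [mem_insert, not_or] at hxJ
    have hxk : x + 1 < k := by simp at hx; omega
    exact hnew ⟨x, hxk, by rw [hσ.apply_eq_succ x hxk hxJ.2]⟩
  calc (cycleEdges σ \ pathEdges u k).ncard
      ≤ #((insert (k - 1) J).image fun x => (u x, σ (u x))) :=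
        (Set.ncard_le_ncard hsub (Finset.finite_toSet _)).trans_eq (Set.ncard_coe_finset _)
    _ ≤ #J + 1 := card_image_le.trans (card_insert_le _ _)

theorem pathEdges_diff_subset (hσ : ClosesPath G u k J σ) {P : ℕ → Prop} (hP : ∀ x ∈ J, P x) :
    pathEdges u k \ cycleEdges σ ⊆ {e | ∃ i, i + 1 < k ∧ e = (u i, u (i + 1)) ∧ P i} := by
  rintro _ ⟨⟨x, hxk, rfl⟩, hold⟩
  refine ⟨x, hxk, rfl, hP x ?_⟩
  by_contra hxJ
  refine hold ⟨?_, hσ.apply_eq_succ x hxk hxJ⟩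
  rw [hσ.support_eq]
  exact mem_image.2 ⟨x, mem_range.2 (by omega), rfl⟩

theorem rotation_properties (hσ : ClosesPath G u k J σ)
    (hpath : ∀ i, i + 1 < k → G (u i) (u (i + 1))) (hJ : #J ≤ 4) {P : ℕ → Prop}
    (hP : ∀ x ∈ J, P x) :
    σ.IsCycle ∧ σ.support = (range k).image u ∧ (∀ v ∈ σ.support, G v (σ v)) ∧
      (cycleEdges σ \ pathEdges u k).ncard ≤ 5 ∧
      pathEdges u k \ cycleEdges σ ⊆ {e | ∃ i, i + 1 < k ∧ e = (u i, u (i + 1)) ∧ P i} :=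
  ⟨hσ.isCycle, hσ.support_eq, hσ.adj hpath, hσ.ncard_cycleEdges_diff_le.trans (by omega),
    hσ.pathEdges_diff_subset hP⟩

end ClosesPath

theorem exists_closesPath_of_jump {G : α → α → Prop} {u : ℕ → α} {k a b : ℕ}
    (hinj : Set.InjOn u (Set.Iio k)) (hab : a < b) (hbk : b + 1 < k)
    (hjump : G (u a) (u (b + 1))) (hlast : G (u (k - 1)) (u (a + 1))) (hback : G (u b) (u 0)) :
    ∃ σ, ClosesPath G u k {a, b} σ := by
  set B₁ := List.Ico 0 (a + 1)
  set B₂ := List.Ico (b + 1) k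
  set B₃ := List.Ico (a + 1) (b + 1)
  have hl : (B₁ ++ B₂ ++ B₃).Perm (List.range k) := by
    rw [← List.Ico.zero_bot, ← List.Ico.append_consecutive (Nat.zero_le _) hbk.le,
      ← List.Ico.append_consecutive (Nat.zero_le _) (by omega : a + 1 ≤ b + 1),
      List.append_assoc, List.append_assoc]
    exact List.perm_append_comm.append_left _
  obtain ⟨hcyc, hsupp, hσ⟩ := formPerm_map_of_perm_range hinj hl (by omega)
  set σ := ((B₁ ++ B₂ ++ B₃).map u).formPerm
  have hinfix : ∀ s t m, s ++ m ++ t = B₁ ++ B₂ ++ B₃ → ∀ x y, [x, y] <:+: m → σ (u x) = u y :=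
    fun s t m h x y hxy => hσ _ x y (List.IsRotated.refl _) (hxy.trans ⟨s, t, h⟩)
  refine ⟨σ, hcyc, hsupp, fun x hxk hx => ?_, ?_⟩
  · rw [mem_insert, mem_singleton, not_or] at hx
    obtain hxa | ⟨hax, hxb⟩ | hbx : x < a ∨ a < x ∧ x < b ∨ b < x := by omega
    · exact hinfix [] (B₂ ++ B₃) B₁ (by simp) _ _ (List.Ico.pair_infix (Nat.zero_le x) (by omega))
    · exact hinfix (B₁ ++ B₂) [] B₃ (by simp) _ _ (List.Ico.pair_infix hax (by omega))
    · exact hinfix B₁ B₃ B₂ (by simp) _ _ (List.Ico.pair_infix hbx hxk)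
  · simp only [mem_insert, mem_singleton]
    rintro x (hx | hx | hx) <;> rw [hx]
    · rwa [hinfix B₁ [] (B₂ ++ B₃) (by simp) _ _
        (List.Ico.pair_infix_append (by omega) (by omega) (by omega))]
    · rwa [hinfix [] B₃ (B₁ ++ B₂) (by simp) _ _
        (List.Ico.pair_infix_append (Nat.zero_le _) rfl hbk)]
    · rwa [hσ _ _ _ List.isRotated_append ((List.Ico.pair_infix_append hab rfl a.zero_lt_succ).trans
        ⟨[], B₂, by simp [B₁, B₃]⟩)]

theorem exists_closesPath_of_double_jump {G : α → α → Prop} {u : ℕ → α} {k i₁ i₂ a₁ a₂ : ℕ}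
    (hinj : Set.InjOn u (Set.Iio k)) (hi : i₁ < i₂) (hia : i₂ < a₁) (ha : a₁ < a₂)
    (hak : a₂ + 1 < k) (hi₁a₂ : G (u i₁) (u (a₂ + 1))) (ha₁i₁ : G (u a₁) (u (i₁ + 1)))
    (ha₂i₂ : G (u a₂) (u (i₂ + 1))) (hlast : G (u (k - 1)) (u (a₁ + 1)))
    (hback : G (u i₂) (u 0)) :
    ∃ σ, ClosesPath G u k {i₁, i₂, a₁, a₂} σ := by
  set B₁ := List.Ico 0 (i₁ + 1)
  set B₂ := List.Ico (a₂ + 1) k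
  set B₃ := List.Ico (a₁ + 1) (a₂ + 1)
  set B₄ := List.Ico (i₂ + 1) (a₁ + 1)
  set B₅ := List.Ico (i₁ + 1) (i₂ + 1)
  have hl : (B₁ ++ B₂ ++ B₃ ++ B₄ ++ B₅).Perm (List.range k) := by
    rw [← List.Ico.zero_bot, ← List.Ico.append_consecutive (Nat.zero_le _) hak.le,
      ← List.Ico.append_consecutive (Nat.zero_le _) (by omega : a₁ + 1 ≤ a₂ + 1),
      ← List.Ico.append_consecutive (Nat.zero_le _) (by omega : i₂ + 1 ≤ a₁ + 1),
      ← List.Ico.append_consecutive (Nat.zero_le _) (by omega : i₁ + 1 ≤ i₂ + 1)]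
    exact List.perm_iff_count.2 fun n => by
      simp only [B₁, B₂, B₃, B₄, B₅, List.count_append]; omega
  obtain ⟨hcyc, hsupp, hσ⟩ := formPerm_map_of_perm_range hinj hl (by omega)
  set σ := ((B₁ ++ B₂ ++ B₃ ++ B₄ ++ B₅).map u).formPerm
  have hinfix : ∀ s t m, s ++ m ++ t = B₁ ++ B₂ ++ B₃ ++ B₄ ++ B₅ →
      ∀ x y, [x, y] <:+: m → σ (u x) = u y :=
    fun s t m h x y hxy => hσ _ x y (List.IsRotated.refl _) (hxy.trans ⟨s, t, h⟩)
  refine ⟨σ, hcyc, hsupp, fun x hxk hx => ?_, ?_⟩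
  · simp only [mem_insert, mem_singleton, not_or] at hx
    obtain hx₁ | ⟨hx₁, hx₂⟩ | ⟨hx₂, hx₃⟩ | ⟨hx₃, hx₄⟩ | hx₄ :
        x < i₁ ∨ i₁ < x ∧ x < i₂ ∨ i₂ < x ∧ x < a₁ ∨ a₁ < x ∧ x < a₂ ∨ a₂ < x := by omega
    · exact hinfix [] (B₂ ++ B₃ ++ B₄ ++ B₅) B₁ (by simp) _ _
        (List.Ico.pair_infix (Nat.zero_le x) (by omega))
    · exact hinfix (B₁ ++ B₂ ++ B₃ ++ B₄) [] B₅ (by simp) _ _ (List.Ico.pair_infix hx₁ (by omega))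
    · exact hinfix (B₁ ++ B₂ ++ B₃) B₅ B₄ (by simp) _ _ (List.Ico.pair_infix hx₂ (by omega))
    · exact hinfix (B₁ ++ B₂) (B₄ ++ B₅) B₃ (by simp) _ _ (List.Ico.pair_infix hx₃ (by omega))
    · exact hinfix B₁ (B₃ ++ B₄ ++ B₅) B₂ (by simp) _ _ (List.Ico.pair_infix hx₄ hxk)
  · simp only [mem_insert, mem_singleton]
    rintro x (hx | hx | hx | hx | hx) <;> rw [hx]
    · rwa [hinfix B₁ (B₄ ++ B₅) (B₂ ++ B₃) (by simp) _ _
        (List.Ico.pair_infix_append (by omega) (by omega) (by omega))]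
    · rwa [hinfix [] (B₃ ++ B₄ ++ B₅) (B₁ ++ B₂) (by simp) _ _
        (List.Ico.pair_infix_append (Nat.zero_le _) rfl hak)]
    · rwa [hσ _ _ _ List.isRotated_append ((List.Ico.pair_infix_append hi rfl i₁.zero_lt_succ).trans
        ⟨[], B₂ ++ B₃ ++ B₄, by simp [B₁, B₅]⟩)]
    · rwa [hinfix (B₁ ++ B₂ ++ B₃) [] (B₄ ++ B₅) (by simp) _ _
        (List.Ico.pair_infix_append hia rfl (by omega))]
    · rwa [hinfix (B₁ ++ B₂) B₅ (B₃ ++ B₄) (by simp) _ _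
        (List.Ico.pair_infix_append ha rfl (by omega))]

end ClosingPaths

theorem exists_card_filter_lt_eq (s : Finset ℕ) {c : ℕ} (hc : c ≤ #s) :
    ∃ t, #{x ∈ s | x < t} = c := by
  have hex : ∃ t, c ≤ #{x ∈ s | x < t} :=
    ⟨s.sup id + 1, by
      rwa [filter_true_of_mem (p := (· < s.sup id + 1)) fun x hx =>
        Nat.lt_succ_of_le (le_sup (f := id) hx)]⟩
  refine ⟨Nat.find hex, le_antisymm ?_ (Nat.find_spec hex)⟩
  cases h : Nat.find hex with
  | zero => simp
  | succ t =>
    have hlt : #{x ∈ s | x < t} < c :=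
      lt_of_not_ge (Nat.find_min hex (by rw [h]; exact t.lt_succ_self))
    have hsub : {x ∈ s | x < t + 1} ⊆ insert t {x ∈ s | x < t} := fun x => by
      simp only [mem_filter, mem_insert]; grind
    have := (card_le_card hsub).trans (card_insert_le _ _)
    omega

theorem exists_threshold_halving (s : Finset ℕ) :
    ∃ t, #s ≤ 2 * #{x ∈ s | x < t} + 1 ∧ #s ≤ 2 * #{x ∈ s | t ≤ x} := by
  obtain ⟨t, ht⟩ := exists_card_filter_lt_eq s (Nat.div_le_self (#s) 2)
  have hsplit := card_filter_add_card_filter_not (s := s) (· < t)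
  simp only [not_lt] at hsplit
  exact ⟨t, by omega, by omega⟩

def JoinsLargeSets {ι : Type*} (J : ι → ι → Prop) (R : Finset ι) (E : ℕ) : Prop :=
  ∀ A ⊆ R, ∀ B ⊆ R, E ≤ #A → E ≤ #B → ∃ a ∈ A, ∃ b ∈ B, J a b

namespace JoinsLargeSets

variable {ι : Type*} {J : ι → ι → Prop} {R : Finset ι} {E : ℕ}

theorem flip (hJ : JoinsLargeSets J R E) : JoinsLargeSets (flip J) R E :=
  fun A hA B hB hAE hBE => by
    obtain ⟨b, hb, a, ha, hba⟩ := hJ B hB A hA hBE hAE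
    exact ⟨a, ha, b, hb, hba⟩

theorem card_lt_card_filter_add (hJ : JoinsLargeSets J R E) {A B : Finset ι} (hA : A ⊆ R)
    (hB : B ⊆ R) (hAE : E ≤ #A) : #B < #{b ∈ B | ∃ a ∈ A, J a b} + E := by
  by_contra! h
  have hsplit := card_filter_add_card_filter_not (s := B) (fun b => ∃ a ∈ A, J a b)
  obtain ⟨a, ha, b, hb, hab⟩ :=
    hJ A hA {b ∈ B | ¬ ∃ a ∈ A, J a b} ((filter_subset _ _).trans hB) hAE (by omega)
  exact (mem_filter.1 hb).2 ⟨a, ha, hab⟩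

end JoinsLargeSets

section Jumps

variable {J : ℕ → ℕ → Prop} {R X Y : Finset ℕ} {E : ℕ}

theorem exists_double_jump (hJ : JoinsLargeSets J R E) (hXR : X ⊆ R) (hYR : Y ⊆ R)
    (hXY : ∀ x ∈ X, ∀ y ∈ Y, x < y) (hX : 4 * E ≤ #X) (hY : 4 * E ≤ #Y) :
    ∃ i₁ ∈ X, ∃ i₂ ∈ X, ∃ a₁ ∈ Y, ∃ a₂ ∈ Y,
      i₁ < i₂ ∧ i₂ < a₁ ∧ a₁ < a₂ ∧ J i₁ a₂ ∧ J a₁ i₁ ∧ J a₂ i₂ := by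
  obtain ⟨tx, hX₁, hX₂⟩ := exists_threshold_halving X
  obtain ⟨ty, hY₁, hY₂⟩ := exists_threshold_halving Y
  set X₁ := {x ∈ X | x < tx}
  set X₂ := {x ∈ X | tx ≤ x}
  set Y₁ := {y ∈ Y | y < ty}
  set Y₂ := {y ∈ Y | ty ≤ y}
  have hX₁R : X₁ ⊆ R := (filter_subset _ _).trans hXR
  have hX₂R : X₂ ⊆ R := (filter_subset _ _).trans hXR
  have hY₁R : Y₁ ⊆ R := (filter_subset _ _).trans hYR
  have hY₂R : Y₂ ⊆ R := (filter_subset _ _).trans hYR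
  have h₁ := hJ.card_lt_card_filter_add hY₁R hX₁R (by omega)
  have h₂ := hJ.flip.card_lt_card_filter_add hX₂R hY₂R (by omega)
  obtain ⟨i₁, hi₁, a₂, ha₂, hi₁a₂⟩ :=
    hJ {x ∈ X₁ | ∃ a ∈ Y₁, J a x} ((filter_subset _ _).trans hX₁R)
      {y ∈ Y₂ | ∃ b ∈ X₂, flip J b y} ((filter_subset _ _).trans hY₂R) (by omega) (by omega)
  obtain ⟨hi₁X₁, a₁, ha₁, ha₁i₁⟩ := mem_filter.1 hi₁
  obtain ⟨ha₂Y₂, i₂, hi₂, ha₂i₂⟩ := mem_filter.1 ha₂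
  simp only [X₁, X₂, Y₁, Y₂, mem_filter] at hi₁X₁ ha₁ ha₂Y₂ hi₂
  exact ⟨i₁, hi₁X₁.1, i₂, hi₂.1, a₁, ha₁.1, a₂, ha₂Y₂.1, by omega, hXY _ hi₂.1 _ ha₁.1, by omega,
    hi₁a₂, ha₁i₁, ha₂i₂⟩

theorem exists_jump_or_double_jump (hJ : JoinsLargeSets J R E) (hXR : X ⊆ R) (hYR : Y ⊆ R)
    (hX : 8 * E ≤ #X) (hY : 8 * E ≤ #Y) :
    (∃ a ∈ Y, ∃ b ∈ X, a < b ∧ J a b) ∨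
      ∃ i₁ ∈ X, ∃ i₂ ∈ X, ∃ a₁ ∈ Y, ∃ a₂ ∈ Y,
        i₁ < i₂ ∧ i₂ < a₁ ∧ a₁ < a₂ ∧ J i₁ a₂ ∧ J a₁ i₁ ∧ J a₂ i₂ := by
  obtain ⟨t, hlo, hhi⟩ := exists_threshold_halving X
  by_cases hYlo : E ≤ #{y ∈ Y | y < t}
  · obtain ⟨a, ha, b, hb, hab⟩ := hJ _ ((filter_subset _ _).trans hYR)
      {x ∈ X | t ≤ x} ((filter_subset _ _).trans hXR) hYlo (by omega)
    rw [mem_filter] at ha hb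
    exact Or.inl ⟨a, ha.1, b, hb.1, by omega, hab⟩
  · have hsplit := card_filter_add_card_filter_not (s := Y) (· < t)
    simp only [not_lt] at hsplit
    obtain ⟨i₁, hi₁, i₂, hi₂, a₁, ha₁, a₂, ha₂, h⟩ :=
      exists_double_jump (X := {x ∈ X | x < t}) (Y := {y ∈ Y | t ≤ y}) hJ
      ((filter_subset _ _).trans hXR) ((filter_subset _ _).trans hYR)
      (fun x hx y hy => by rw [mem_filter] at hx hy; omega) (by omega) (by omega)
    exact Or.inr ⟨i₁, (mem_filter.1 hi₁).1, i₂, (mem_filter.1 hi₂).1, a₁, (mem_filter.1 ha₁).1,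
      a₂, (mem_filter.1 ha₂).1, h⟩

end Jumps

section Expansion

variable {α : Type*} {G : α → α → Prop}

theorem exists_adj_of_le_card_filter {S T : Finset α} {c : ℝ} (hc : 0 < c)
    (hST : c * #S * #T / 2 ≤ #{p ∈ S ×ˢ T | G p.1 p.2}) (hS : S.Nonempty) (hT : T.Nonempty) :
    ∃ s ∈ S, ∃ t ∈ T, G s t := by
  have hpos : 0 < c * #S * #T / 2 := by
    have := hS.card_pos; have := hT.card_pos; positivity
  obtain ⟨⟨s, t⟩, hst⟩ := card_pos.1 (by exact_mod_cast hpos.trans_le hST)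
  rw [mem_filter, mem_product] at hst
  exact ⟨s, hst.1.1, t, hst.1.2, hst.2⟩

theorem joinsLargeSets_of_forall_exists_adj [DecidableEq α] {U V : Finset α} {u : ℕ → α} {k E : ℕ}
    {R : Finset ℕ} (hUV : ∀ S ⊆ U, ∀ T ⊆ V, E ≤ #S → E ≤ #T → ∃ s ∈ S, ∃ t ∈ T, G s t)
    (hinj : Set.InjOn u (Set.Iio k)) (hR : ∀ i ∈ R, i + 1 < k ∧ u i ∈ U ∧ u (i + 1) ∈ V) :
    JoinsLargeSets (fun a b => G (u a) (u (b + 1))) R E := by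
  intro A hA B hB hAE hBE
  have hAinj : Set.InjOn u A := hinj.mono fun i hi => by
    have := (hR i (hA hi)).1; simp only [Set.mem_Iio]; omega
  have hBinj : Set.InjOn (fun b => u (b + 1)) B := fun i hi j hj hij => by
    have := (hR i (hB hi)).1; have := (hR j (hB hj)).1
    have := hinj (by simp only [Set.mem_Iio]; omega) (by simp only [Set.mem_Iio]; omega) hij
    omega
  obtain ⟨_, hs, _, ht, hst⟩ := hUV (A.image u)
    (fun v hv => by obtain ⟨i, hi, rfl⟩ := mem_image.1 hv; exact (hR i (hA hi)).2.1)
    (B.image fun b => u (b + 1))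
    (fun v hv => by obtain ⟨i, hi, rfl⟩ := mem_image.1 hv; exact (hR i (hB hi)).2.2)
    (by rwa [card_image_of_injOn hAinj]) (by rwa [card_image_of_injOn hBinj])
  obtain ⟨a, ha, rfl⟩ := mem_image.1 hs
  obtain ⟨b, hb, rfl⟩ := mem_image.1 ht
  exact ⟨a, ha, b, hb, hst⟩

end Expansion

theorem card_filter_range_sub_one_eq {k : ℕ} (p : ℕ → ℕ → Prop) [∀ i j, Decidable (p i j)] :
    #{j ∈ range k | 1 ≤ j ∧ p (j - 1) j} = #{i ∈ range k | i + 1 < k ∧ p i (i + 1)} := by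
  refine card_nbij' (· - 1) (· + 1) ?_ ?_ ?_ ?_ <;> intro x hx <;>
    simp only [coe_filter, mem_range, Set.mem_ofPred_eq] at hx ⊢
  · obtain ⟨hxk, hx1, hp⟩ := hx
    refine ⟨by omega, by omega, by rwa [Nat.sub_add_cancel hx1]⟩
  · exact ⟨by omega, by omega, hx.2.2⟩
  · omega
  · omega

theorem eight_mul_ceil_le {x y : ℝ} (hx : 1 ≤ x) (hxy : 16 * x ≤ y) : (8 * ⌈x⌉₊ : ℝ) ≤ y := by
  have := Nat.ceil_le_two_mul (a := x) (by linarith)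
  linarith

/-- Rotation–Extension lemma: given a directed path `u 0, …, u (k-1)` in an
oriented graph, with endpoints in `V` resp. `U`, many "rotation" in-neighbours `X` and
out-neighbours `Y`, and a bipartite expansion property between `U` and `V`, there is a
cycle `σ` on exactly the vertices of the path using at most `5` new edges, and every path
edge not in the cycle goes from `X` to `X⁺` or from `Y⁻` to `Y`. -/
theorem rotation_extension_lemma :
    ∀ γ : ℝ, 0 < γ → γ < 1 →
    ∃ ε₀ : ℝ, 0 < ε₀ ∧
    ∀ ε : ℝ, 0 < ε → ε ≤ ε₀ →
    ∃ m₀ : ℕ, ∀ m : ℕ, m₀ ≤ m →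
    ∀ (Vt : Type) [Fintype Vt] [DecidableEq Vt], 2 * m ≤ Fintype.card Vt →
    ∀ G : Vt → Vt → Prop,
      (∀ v, ¬ G v v) →
      (∀ a b : Vt, G a b → ¬ G b a) →
    ∀ U V : Finset Vt, Disjoint U V → U.card = m → V.card = m →
      (∀ S ⊆ U, ∀ T ⊆ V, ε * (m : ℝ) ≤ (S.card : ℝ) → ε * (m : ℝ) ≤ (T.card : ℝ) →
        γ * (S.card : ℝ) * (T.card : ℝ) / 2 ≤
          (((S ×ˢ T).filter fun p => G p.1 p.2).card : ℝ)) →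
    ∀ k : ℕ, 1 ≤ k → ∀ u : ℕ → Vt,
      (∀ i < k, ∀ j < k, u i = u j → i = j) →
      (∀ i, i + 1 < k → G (u i) (u (i+1))) →
      u 0 ∈ V → u (k-1) ∈ U →
      γ * (m : ℝ) ≤ (((Finset.range k).filter fun i =>
          i + 1 < k ∧ G (u i) (u 0) ∧ u i ∈ U ∧ u (i+1) ∈ V).card : ℝ) →
      γ * (m : ℝ) ≤ (((Finset.range k).filter fun i =>
          1 ≤ i ∧ G (u (k-1)) (u i) ∧ u i ∈ V ∧ u (i-1) ∈ U).card : ℝ) →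
      ∃ σ : Equiv.Perm Vt,
        σ.IsCycle ∧
        σ.support = (Finset.range k).image u ∧
        (∀ v ∈ σ.support, G v (σ v)) ∧
        Set.ncard ({e : Vt × Vt | e.1 ∈ σ.support ∧ σ e.1 = e.2} \
          {e : Vt × Vt | ∃ i, i + 1 < k ∧ e = (u i, u (i+1))}) ≤ 5 ∧
        ({e : Vt × Vt | ∃ i, i + 1 < k ∧ e = (u i, u (i+1))} \
          {e : Vt × Vt | e.1 ∈ σ.support ∧ σ e.1 = e.2}) ⊆
          {e : Vt × Vt | ∃ i, i + 1 < k ∧ e = (u i, u (i+1)) ∧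
            ((G (u i) (u 0) ∧ u i ∈ U ∧ u (i+1) ∈ V) ∨
             (G (u (k-1)) (u (i+1)) ∧ u (i+1) ∈ V ∧ u i ∈ U))} := by
  intro γ hγ _
  refine ⟨γ / 16, by positivity, fun ε hε hεγ => ⟨⌈1 / ε⌉₊, fun m hm Vt _ _ _ G _ _ U V _ _ _
    hdens k _ u hinj hpath _ _ hX hY => ?_⟩⟩
  have hεm : 1 ≤ ε * m := by
    have := Nat.ceil_le.1 hm
    rw [div_le_iff₀ hε] at this
    linarith
  have hE := eight_mul_ceil_le hεm (by nlinarith [m.cast_nonneg (α := ℝ)] : 16 * (ε * m) ≤ γ * m)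
  have hE₀ : 0 < ⌈ε * m⌉₊ := Nat.ceil_pos.2 (by linarith)
  set X := {i ∈ range k | i + 1 < k ∧ G (u i) (u 0) ∧ u i ∈ U ∧ u (i + 1) ∈ V}
  set Y := {i ∈ range k | i + 1 < k ∧ G (u (k - 1)) (u (i + 1)) ∧ u (i + 1) ∈ V ∧ u i ∈ U}
  have hY' : γ * m ≤ #Y := hY.trans_eq (by
    rw [card_filter_range_sub_one_eq fun i j => G (u (k - 1)) (u j) ∧ u j ∈ V ∧ u i ∈ U])
  have hR : ∀ i ∈ X ∪ Y, i + 1 < k ∧ u i ∈ U ∧ u (i + 1) ∈ V := by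
    intro i hi
    rw [mem_union, mem_filter, mem_filter] at hi
    tauto
  have hJ := joinsLargeSets_of_forall_exists_adj (fun S hS T hT hSE hTE =>
    exists_adj_of_le_card_filter hγ (hdens S hS T hT (Nat.ceil_le.1 hSE) (Nat.ceil_le.1 hTE))
      (card_pos.1 (by omega)) (card_pos.1 (by omega))) hinj hR
  rcases exists_jump_or_double_jump hJ subset_union_left subset_union_right
    (by exact_mod_cast hE.trans hX) (by exact_mod_cast hE.trans hY') with
    ⟨a, ha, b, hb, hab, hjump⟩ | ⟨i₁, hi₁, i₂, hi₂, a₁, ha₁, a₂, ha₂, hi, hia, ha, h₁, h₂, h₃⟩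
  · rw [mem_filter] at ha hb
    obtain ⟨σ, hσ⟩ := exists_closesPath_of_jump hinj hab hb.2.1 hjump ha.2.2.1 hb.2.2.1
    refine ⟨σ, hσ.rotation_properties hpath (card_le_two.trans (by norm_num)) ?_⟩
    simp only [mem_insert, mem_singleton, forall_eq_or_imp, forall_eq]
    exact ⟨Or.inr ha.2.2, Or.inl hb.2.2⟩
  · rw [mem_filter] at hi₁ hi₂ ha₁ ha₂
    obtain ⟨σ, hσ⟩ := exists_closesPath_of_double_jump hinj hi hia ha ha₂.2.1 h₁ h₂ h₃
      ha₁.2.2.1 hi₂.2.2.1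
    refine ⟨σ, hσ.rotation_properties hpath card_le_four ?_⟩
    simp only [mem_insert, mem_singleton, forall_eq_or_imp, forall_eq]
    exact ⟨Or.inl hi₁.2.2, Or.inl hi₂.2.2, Or.inr ha₁.2.2, Or.inr ha₂.2.2⟩
end

section
/- Suppose 0 < c ≪ d' ≪ 1 (d' sufficiently small, c sufficiently small in terms of d'). Let R' be a digraph on L vertices such that δ⁰(R') ≥ (1/2 − 2d')L and such that for all (not necessarily disjoint) sets A, B of vertices with |A|, |B| ≥ (1/2 − 3d')L there is at least one edge of R' directed from A to B. Let F be a collection of vertex-disjoint directed cycles with all vertices in R' and covering at least (1 − c)L vertices. Then R' contains a closed shifted walk with respect to F in which each cycle of F is traversed at most 3L times. -/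
/-! Any two vertices `u, v` are joined by a shifted walk `u → a⁺, a → b⁺, b → v⁺` with `a, b`
on cycles of `F`: the shifted out-neighbourhood `{a | u → a⁺}` of `u` and the in-neighbourhood
of `v⁺` have at least `(1/2 - 2d')L` vertices, so each keeps `(1/2 - 3d')L` of them on `V(F)`,
and the expansion property puts an edge between the two. Concatenating such walks along a cyclic
enumeration of `V(F)` gives a closed shifted walk of length `3|V(F)| ≤ 3L` that visits every
cycle. -/

open scoped Classical

/-- Outdegree of a vertex in a digraph given as a relation. -/
noncomputable def outDeg {V : Type*} [Fintype V] (G : V → V → Prop) (v : V) : ℕ :=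
  (Finset.univ.filter fun u => G v u).card

/-- Indegree of a vertex in a digraph given as a relation. -/
noncomputable def inDeg {V : Type*} [Fintype V] (G : V → V → Prop) (v : V) : ℕ :=
  (Finset.univ.filter fun u => G u v).card

open Finset

theorem Finset.card_add_card_le_card_inter_add_card_univ {α : Type*} [Fintype α] [DecidableEq α]
    (s t : Finset α) : #s + #t ≤ #(s ∩ t) + Fintype.card α := by
  rw [← card_inter_add_card_union]
  gcongr
  exact card_le_univ _

theorem Finset.exists_periodic_enumeration {α : Type*} {S : Finset α} (hS : S.Nonempty) :
    ∃ f : ℕ → α, Function.Periodic f #S ∧ (∀ j, f j ∈ S) ∧ ∀ v ∈ S, ∃ j < #S, f j = v := by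
  let f (j : ℕ) : α := S.equivFin.symm ⟨j % #S, Nat.mod_lt _ hS.card_pos⟩
  refine ⟨f, fun j => by simp [f], fun j => (S.equivFin.symm _).2, fun v hv => ?_⟩
  refine ⟨S.equivFin ⟨v, hv⟩, (S.equivFin ⟨v, hv⟩).2, ?_⟩
  simp [f, Nat.mod_eq_of_lt (S.equivFin ⟨v, hv⟩).2]

theorem exists_closed_walk_through_finset {V : Type*} {E : V → V → Prop} {S : Finset V}
    (hS : S.Nonempty) (hpath : ∀ u v, ∃ a ∈ S, ∃ b ∈ S, E u a ∧ E a b ∧ E b v) :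
    ∃ w : ℕ → V, (∀ i, w i ∈ S) ∧ (∀ i < 3 * #S, E (w i) (w ((i + 1) % (3 * #S)))) ∧
      ∀ v ∈ S, ∃ i < 3 * #S, w i = v := by
  obtain ⟨f, hf_per, hfS, hf_surj⟩ := S.exists_periodic_enumeration hS
  choose a ha b hb hua hab hbv using hpath
  let node (q r : ℕ) : V :=
    if r = 0 then f q else if r = 1 then a (f q) (f (q + 1)) else b (f q) (f (q + 1))
  let w (i : ℕ) : V := node (i / 3) (i % 3)
  have hw : ∀ q r, r < 3 → w (3 * q + r) = node q r := fun q r hr => by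
    simp only [w, Nat.mul_add_div three_pos, Nat.mul_add_mod, Nat.mod_eq_of_lt hr,
      Nat.div_eq_of_lt hr, add_zero]
  have hw_per : Function.Periodic w (3 * #S) := fun i => by
    simp only [w, node, Nat.add_mul_div_left _ _ three_pos, Nat.add_mul_mod_self_left,
      hf_per (i / 3), add_right_comm (i / 3) #S 1, hf_per (i / 3 + 1)]
  have hstep : ∀ i, E (w i) (w (i + 1)) := by
    intro i
    obtain ⟨q, r, hr, rfl⟩ : ∃ q r, r < 3 ∧ i = 3 * q + r :=
      ⟨i / 3, i % 3, Nat.mod_lt _ three_pos, (Nat.div_add_mod i 3).symm⟩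
    interval_cases r
    · rw [hw q 0 (by norm_num), hw q 1 (by norm_num)]
      exact hua _ _
    · rw [hw q 1 (by norm_num), hw q 2 (by norm_num)]
      exact hab _ _
    · rw [hw q 2 (by norm_num), show 3 * q + 2 + 1 = 3 * (q + 1) + 0 by ring,
        hw (q + 1) 0 (by norm_num)]
      exact hbv _ _
  refine ⟨w, fun i => ?_, fun i _ => hw_per.map_mod_nat (i + 1) ▸ hstep i, fun v hv => ?_⟩
  · simp only [w, node]
    split_ifs
    exacts [hfS _, ha _ _, hb _ _]
  · obtain ⟨j, hj, rfl⟩ := hf_surj v hv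
    exact ⟨3 * j + 0, by omega, hw j 0 (by norm_num)⟩

theorem exists_shifted_path {V : Type*} [Fintype V] [DecidableEq V] {R : V → V → Prop}
    {φ : Equiv.Perm V} {δ ε : ℝ}
    (hdeg : ∀ v, δ * Fintype.card V ≤ outDeg R v ∧ δ * Fintype.card V ≤ inDeg R v)
    (hedge : ∀ A B : Finset V, (δ - ε) * Fintype.card V ≤ #A →
      (δ - ε) * Fintype.card V ≤ #B → ∃ a ∈ A, ∃ b ∈ B, R a b)
    (hsupp : (1 - ε) * Fintype.card V ≤ #φ.support) (u v : V) :
    ∃ a ∈ φ.support, ∃ b ∈ φ.support, R u (φ a) ∧ R a (φ b) ∧ R b (φ v) := by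
  have hlarge : ∀ T : Finset V, δ * Fintype.card V ≤ #T →
      (δ - ε) * Fintype.card V ≤ #(φ.support ∩ T) := fun T hT => by
    have := card_add_card_le_card_inter_add_card_univ φ.support T
    have : (#φ.support + #T : ℝ) ≤ #(φ.support ∩ T) + Fintype.card V := by exact_mod_cast this
    linarith
  have hout : #({x | R u (φ x)} : Finset V) = outDeg R u := card_equiv φ (by simp)
  obtain ⟨a, ha, _, hb_map, hab⟩ := hedge (φ.support ∩ ({x | R u (φ x)} : Finset V))
    ((φ.support ∩ ({x | R x (φ v)} : Finset V)).map φ.toEmbedding)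
    (hlarge _ (hout ▸ (hdeg u).1)) (by rw [card_map]; exact hlarge _ (hdeg (φ v)).2)
  obtain ⟨b, hb, rfl⟩ := mem_map.mp hb_map
  simp only [mem_inter, mem_filter_univ] at ha hb
  exact ⟨a, ha.1, b, hb.1, ha.2, hab, hb.2⟩

/-- The collection `F` of vertex-disjoint cycles is encoded by a permutation `φ` (its cycles on
its support are the cycles of `F`), and a closed shifted walk by the cyclic sequence
`w 0, …, w (s-1)` of its exit vertices `c₁, …, c_s`, consecutive exits being joined by the edge
`c_i → c_{i+1}⁺ = φ (c_{i+1})`. -/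
theorem closed_shifted_walk_exists :
    ∃ d₁ : ℝ, 0 < d₁ ∧
    ∀ d' : ℝ, 0 < d' → d' ≤ d₁ →
    ∃ c₀ : ℝ, 0 < c₀ ∧
    ∀ c : ℝ, 0 < c → c ≤ c₀ →
    ∀ (V : Type) [Fintype V] [DecidableEq V],
    ∀ R : V → V → Prop,
      (∀ v, (1/2 - 2*d') * (Fintype.card V : ℝ) ≤ (outDeg R v : ℝ) ∧
            (1/2 - 2*d') * (Fintype.card V : ℝ) ≤ (inDeg R v : ℝ)) →
      (∀ A B : Finset V,
        (1/2 - 3*d') * (Fintype.card V : ℝ) ≤ (A.card : ℝ) →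
        (1/2 - 3*d') * (Fintype.card V : ℝ) ≤ (B.card : ℝ) →
        ∃ a ∈ A, ∃ b ∈ B, R a b) →
    ∀ φ : Equiv.Perm V,
      (1 - c) * (Fintype.card V : ℝ) ≤ (φ.support.card : ℝ) →
      ∃ s : ℕ, 1 ≤ s ∧ ∃ w : ℕ → V,
        (∀ i < s, w i ∈ φ.support) ∧
        (∀ i < s, R (w i) (φ (w ((i+1) % s)))) ∧
        (∀ v ∈ φ.support,
          1 ≤ ((Finset.range s).filter fun i => φ.SameCycle (w i) v).card ∧
          ((Finset.range s).filter fun i => φ.SameCycle (w i) v).card ≤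
            3 * Fintype.card V) := by
  -- `c₀ = d'` keeps `(1 - d')L` vertices on the cycles; the choice of `d₁` is immaterial.
  refine ⟨1, one_pos, fun d' hd' _ => ⟨d', hd', fun c _ hcd V _ _ R hdeg hedge φ hsupp => ?_⟩⟩
  have hL : (0 : ℝ) ≤ Fintype.card V := Nat.cast_nonneg _
  have hpath := exists_shifted_path (ε := d') hdeg
    (fun A B hA hB => hedge A B (by linarith) (by linarith))
    ((mul_le_mul_of_nonneg_right (by linarith) hL).trans hsupp)
  obtain ⟨u, -⟩ := hedge univ univ (by rw [card_univ]; nlinarith) (by rw [card_univ]; nlinarith)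
  obtain ⟨a, ha, -⟩ := hpath u u
  obtain ⟨w, hwS, hwE, hw_visit⟩ := exists_closed_walk_through_finset ⟨a, ha⟩ hpath
  refine ⟨3 * #φ.support, by have := card_pos.mpr ⟨a, ha⟩; omega, w, fun i _ => hwS i, hwE,
    fun v hv => ⟨?_, ?_⟩⟩
  · obtain ⟨i, hi, rfl⟩ := hw_visit v hv
    exact card_pos.mpr ⟨i, mem_filter.mpr ⟨mem_range.mpr hi, Equiv.Perm.SameCycle.refl _ _⟩⟩
  · calc _ ≤ #(range (3 * #φ.support)) := card_filter_le _ _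
      _ ≤ 3 * Fintype.card V := by rw [card_range]; gcongr; exact card_le_univ _
end

section
/- Suppose 0 < 1/L ≪ ε ≪ β ≪ d ≪ c₁ ≤ c₂ < 1 (each parameter sufficiently small in terms of the ones to its right) and n is sufficiently large. Let G be a digraph on n vertices with minimum semidegree δ⁰(G) ≥ c₁n and maximum semidegree Δ⁰(G) ≤ c₂n, and suppose the vertex set of G is partitioned into V₀, V₁, …, V_L with |V₀| ≤ εn and |V₁| = ⋯ = |V_L| = m. Let G' be a spanning subdigraph of G such that d⁺_{G'}(x) > d⁺_G(x) − (d+ε)n and d⁻_{G'}(x) > d⁻_G(x) − (d+ε)n for all vertices x, and such that no edge of G' has both endpoints in the same V_i (1 ≤ i ≤ L). For i ≠ j let d_{i,j} := e_{G'}(V_i, V_j)/m². Then for every i with 1 ≤ i ≤ L one has (c₁ − 3d)L/β < Σ_{j≠i} ⌊d_{i,j}/β⌋ < (c₂ + 2ε)L/β and (c₁ − 3d)L/β < Σ_{j≠i} ⌊d_{j,i}/β⌋ < (c₂ + 2ε)L/β. -/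
/-
Fix a cluster `V_i`. As `G'` has no edge inside `V_i`, the out-degrees of `G'` summed over `V_i`
count the edges into `V₀` (at most `m · εn`) plus `m² Σ_{j ≠ i} d_{i,j}`; hence
`(c₁ - d - 2ε) n ≤ m Σ_j d_{i,j} ≤ c₂ n`. Since `(1 - ε) n ≤ L m ≤ n`, the density sum lies
between `(c₁ - d - 2ε) L` and `c₂ L / (1 - ε) < (c₂ + 2ε) L`. Rounding down loses less than one per
cluster, at most `L` in total, which the slack `(2d - 2ε) L / β > L` absorbs. In-degrees are the
out-degrees of the reversed digraph.
-/

open scoped Classical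

/-- Number of edges of the digraph `G` directed from `X` to `Y`. -/
noncomputable def eDir {V : Type*} (G : V → V → Prop) (X Y : Finset V) : ℕ :=
  ((X ×ˢ Y).filter fun p => G p.1 p.2).card

open Finset

section Digraph

variable {V : Type*}

theorem eDir_eq_sum_card_filter (H : V → V → Prop) (X Y : Finset V) :
    eDir H X Y = ∑ x ∈ X, (Y.filter (H x)).card := by
  rw [eDir, card_filter, sum_product]
  exact sum_congr rfl fun x _ => (card_filter _ _).symm

theorem eDir_flip (H : V → V → Prop) (X Y : Finset V) : eDir (flip H) X Y = eDir H Y X := by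
  refine card_bij' (fun p _ => p.swap) (fun p _ => p.swap) ?_ ?_ (by simp) (by simp) <;>
    rintro ⟨a, b⟩ <;> simp only [mem_filter, mem_product] <;> exact fun h => ⟨h.1.symm, h.2⟩

theorem eDir_le_card_mul_card (H : V → V → Prop) (X Y : Finset V) :
    eDir H X Y ≤ #X * #Y :=
  (card_filter_le _ _).trans (card_product X Y).le

theorem eDir_self_eq_zero {H : V → V → Prop} {X : Finset V}
    (hX : ∀ x ∈ X, ∀ y ∈ X, ¬ H x y) : eDir H X X = 0 := by
  rw [eDir, card_eq_zero, filter_eq_empty_iff]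
  exact fun p hp => hX p.1 (mem_product.1 hp).1 p.2 (mem_product.1 hp).2

theorem eDir_union_right (H : V → V → Prop) (X : Finset V) {Y Z : Finset V}
    (hYZ : Disjoint Y Z) : eDir H X (Y ∪ Z) = eDir H X Y + eDir H X Z := by
  rw [eDir, product_union, filter_union, card_union_of_disjoint]
  · rfl
  · exact disjoint_filter_filter (disjoint_product.2 (Or.inr hYZ))

theorem eDir_biUnion_right {ι : Type*} (H : V → V → Prop) (X : Finset V) (s : Finset ι)
    {P : ι → Finset V} (hP : (s : Set ι).PairwiseDisjoint P) :
    eDir H X (s.biUnion P) = ∑ j ∈ s, eDir H X (P j) := by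
  simp only [eDir_eq_sum_card_filter, filter_biUnion]
  rw [sum_comm]
  exact sum_congr rfl fun x _ =>
    card_biUnion fun j hj k hk hjk => disjoint_filter_filter (hP hj hk hjk)

variable [Fintype V]

theorem outDeg_mono {H G : V → V → Prop} (hHG : ∀ a b, H a b → G a b) (v : V) :
    outDeg H v ≤ outDeg G v :=
  card_le_card <| monotone_filter_right _ fun u _ => hHG v u

theorem sum_outDeg_eq_eDir_univ (H : V → V → Prop) (X : Finset V) :
    ∑ x ∈ X, outDeg H x = eDir H X univ :=
  (eDir_eq_sum_card_filter H X univ).symm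

end Digraph

section Floor

variable {R ι : Type*} [Ring R] [LinearOrder R] [IsStrictOrderedRing R] [FloorSemiring R]

theorem sum_sub_card_le_sum_natFloor (s : Finset ι) (g : ι → R) :
    ∑ i ∈ s, g i - #s ≤ ∑ i ∈ s, (⌊g i⌋₊ : R) := by
  calc ∑ i ∈ s, g i - #s = ∑ i ∈ s, (g i - 1) := by simp [sum_sub_distrib]
    _ ≤ _ := sum_le_sum fun i _ => (Nat.sub_one_lt_floor (g i)).le

theorem sum_natFloor_le_sum {s : Finset ι} {g : ι → R} (hg : ∀ i ∈ s, 0 ≤ g i) :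
    ∑ i ∈ s, (⌊g i⌋₊ : R) ≤ ∑ i ∈ s, g i :=
  sum_le_sum fun i hi => Nat.floor_le (hg i hi)

end Floor

section Arithmetic

variable {c d ε β n m L D : ℝ}

theorem lower_bound_of_density (hβ : 0 < β) (hβd : β < 2 * (d - ε))
    (hc : d + 2 * ε ≤ c) (hm : 0 < m) (hL : 0 < L) (hLm : L * m ≤ n)
    (hD : (c - d - 2 * ε) * n ≤ m * D) :
    (c - 3 * d) * L / β < D / β - L := by
  have hDL : (c - d - 2 * ε) * L ≤ D := by
    refine le_of_mul_le_mul_left ?_ hm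
    nlinarith
  rw [div_sub' hβ.ne', div_lt_div_iff_of_pos_right hβ]
  nlinarith

theorem upper_bound_of_density (hβ : 0 < β) (hε : 0 < ε) (hc : 0 ≤ c) (hcε : c + 2 * ε < 2)
    (hn : 0 < n) (hm : 0 < m) (hmL : (1 - ε) * n ≤ L * m) (hD : m * D ≤ c * n) :
    D / β < (c + 2 * ε) * L / β := by
  rw [div_lt_div_iff_of_pos_right hβ]
  have hcn : c * n < (c + 2 * ε) * (1 - ε) * n := by
    nlinarith [mul_pos (mul_pos hε hn) (sub_pos.2 hcε)]
  have hLm : (c + 2 * ε) * (1 - ε) * n ≤ (c + 2 * ε) * (L * m) := by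
    rw [mul_assoc]; gcongr
  refine lt_of_mul_lt_mul_left ?_ hm.le
  linarith

end Arithmetic

section Partition

variable {V : Type*} [Fintype V] {L : ℕ} {V₀ : Finset V} {P : Fin L → Finset V}

theorem univ_eq_union_biUnion (hcover : ∀ v, v ∈ V₀ ∨ ∃ i, v ∈ P i) :
    (univ : Finset V) = V₀ ∪ univ.biUnion P :=
  (eq_univ_of_forall fun v => by simpa [mem_union, mem_biUnion] using hcover v).symm

theorem card_eq_card_add_mul {m : ℕ} (hV₀ : ∀ i, Disjoint V₀ (P i))
    (hP : ∀ i j, i ≠ j → Disjoint (P i) (P j)) (hcover : ∀ v, v ∈ V₀ ∨ ∃ i, v ∈ P i)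
    (hm : ∀ i, #(P i) = m) : Fintype.card V = #V₀ + L * m := by
  rw [← card_univ, univ_eq_union_biUnion hcover, card_union_of_disjoint
    ((disjoint_biUnion_right _ _ _).2 fun i _ => hV₀ i), card_biUnion fun i _ j _ hij => hP i j hij]
  simp [hm]

theorem sum_outDeg_cluster (H : V → V → Prop) (hV₀ : ∀ i, Disjoint V₀ (P i))
    (hP : ∀ i j, i ≠ j → Disjoint (P i) (P j)) (hcover : ∀ v, v ∈ V₀ ∨ ∃ i, v ∈ P i)
    {i : Fin L} (hi : ∀ x ∈ P i, ∀ y ∈ P i, ¬ H x y) :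
    ∑ x ∈ P i, outDeg H x = eDir H (P i) V₀ + ∑ j ∈ univ.erase i, eDir H (P i) (P j) := by
  rw [sum_outDeg_eq_eDir_univ, univ_eq_union_biUnion hcover,
    eDir_union_right _ _ ((disjoint_biUnion_right _ _ _).2 fun j _ => hV₀ j),
    eDir_biUnion_right _ _ _ fun j _ k _ hjk => hP j k hjk, ← add_sum_erase _ _ (mem_univ i),
    eDir_self_eq_zero hi, zero_add]

theorem density_sum_bounds (H : V → V → Prop) (hV₀ : ∀ i, Disjoint V₀ (P i))
    (hP : ∀ i j, i ≠ j → Disjoint (P i) (P j)) (hcover : ∀ v, v ∈ V₀ ∨ ∃ i, v ∈ P i)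
    {i : Fin L} (hi : ∀ x ∈ P i, ∀ y ∈ P i, ¬ H x y) {m : ℕ} (hm : #(P i) = m)
    {lo up k : ℝ} (hlo : ∀ x ∈ P i, lo ≤ outDeg H x) (hup : ∀ x ∈ P i, outDeg H x ≤ up)
    (hk : #V₀ ≤ k) :
    m * (lo - k) ≤ ∑ j ∈ univ.erase i, (eDir H (P i) (P j) : ℝ) ∧
      ∑ j ∈ univ.erase i, (eDir H (P i) (P j) : ℝ) ≤ m * up := by
  have hsum := congrArg (Nat.cast : ℕ → ℝ) (sum_outDeg_cluster H hV₀ hP hcover hi)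
  push_cast at hsum
  have hsum_lo : m * lo ≤ ∑ x ∈ P i, (outDeg H x : ℝ) := by
    simpa [hm] using card_nsmul_le_sum _ _ _ hlo
  have hsum_up : ∑ x ∈ P i, (outDeg H x : ℝ) ≤ m * up := by
    simpa [hm] using sum_le_card_nsmul _ _ _ hup
  have hV₀_edges : (eDir H (P i) V₀ : ℝ) ≤ m * k := by
    calc (eDir H (P i) V₀ : ℝ) ≤ m * #V₀ := by
          rw [← hm]; exact_mod_cast eDir_le_card_mul_card H _ _
      _ ≤ m * k := by gcongr
  constructor
  · linarith
  · linarith [(eDir H (P i) V₀).cast_nonneg (α := ℝ)]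

theorem reduced_outDeg_bounds {G H : V → V → Prop} (hHG : ∀ a b, H a b → G a b)
    {c₁ c₂ d ε β : ℝ} {n m : ℕ} (hβ : 0 < β) (hβd : β < 2 * (d - ε)) (hc₁ : d + 2 * ε ≤ c₁)
    (hε : 0 < ε) (hc₂ : 0 ≤ c₂) (hc₂ε : c₂ + 2 * ε < 2) (hn : 0 < n)
    (hG : ∀ v, c₁ * n ≤ outDeg G v ∧ outDeg G v ≤ c₂ * n)
    (hH : ∀ x, outDeg G x - (d + ε) * n < outDeg H x)
    (hV₀ : ∀ i, Disjoint V₀ (P i)) (hP : ∀ i j, i ≠ j → Disjoint (P i) (P j))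
    (hcover : ∀ v, v ∈ V₀ ∨ ∃ i, v ∈ P i) (hV₀card : #V₀ ≤ ε * n) (hm : ∀ i, #(P i) = m)
    (hcard : Fintype.card V = n) (i : Fin L) (hi : ∀ x ∈ P i, ∀ y ∈ P i, ¬ H x y) :
    (c₁ - 3 * d) * L / β <
        ((∑ j ∈ univ.erase i, ⌊(eDir H (P i) (P j) : ℝ) / (m : ℝ) ^ 2 / β⌋₊ : ℕ) : ℝ) ∧
      ((∑ j ∈ univ.erase i, ⌊(eDir H (P i) (P j) : ℝ) / (m : ℝ) ^ 2 / β⌋₊ : ℕ) : ℝ) <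
        (c₂ + 2 * ε) * L / β := by
  have hsize : (#V₀ : ℝ) + L * m = n := by
    exact_mod_cast (hcard ▸ card_eq_card_add_mul hV₀ hP hcover hm).symm
  have hn' : (0 : ℝ) < n := by exact_mod_cast hn
  have hLm_pos : 0 < (L : ℝ) * m := by nlinarith
  have hm' : (0 : ℝ) < m := pos_of_mul_pos_right hLm_pos (Nat.cast_nonneg L)
  have hL' : (0 : ℝ) < L := pos_of_mul_pos_left hLm_pos hm'.le
  have hLm_le : (L : ℝ) * m ≤ n := by linarith [(#V₀).cast_nonneg (α := ℝ)]
  have hLm_ge : (1 - ε) * n ≤ (L : ℝ) * m := by linarith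
  obtain ⟨hE_lo, hE_up⟩ := density_sum_bounds H hV₀ hP hcover hi (hm i)
    (lo := (c₁ - d - ε) * n) (up := c₂ * n)
    (fun x _ => by linarith [hG x, hH x])
    (fun x _ => (Nat.cast_le.2 (outDeg_mono hHG x)).trans (hG x).2) hV₀card
  set E := ∑ j ∈ univ.erase i, (eDir H (P i) (P j) : ℝ)
  set D := ∑ j ∈ univ.erase i, (eDir H (P i) (P j) : ℝ) / (m : ℝ) ^ 2
  have hmD : (m : ℝ) * D = E / m := by
    rw [show D = E / (m : ℝ) ^ 2 from (sum_div ..).symm]; field_simp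
  have hfloor_sum : ∑ j ∈ univ.erase i, (eDir H (P i) (P j) : ℝ) / (m : ℝ) ^ 2 / β = D / β :=
    (sum_div ..).symm
  have hD_lo : (c₁ - d - 2 * ε) * n ≤ m * D := by rw [hmD, le_div_iff₀ hm']; linarith
  have hD_up : m * D ≤ c₂ * n := by rw [hmD, div_le_iff₀ hm']; linarith
  push_cast
  constructor
  · calc (c₁ - 3 * d) * L / β < D / β - L :=
          lower_bound_of_density hβ hβd hc₁ hm' hL' hLm_le hD_lo
      _ ≤ D / β - #(univ.erase i) := by gcongr; simp
      _ ≤ _ := hfloor_sum ▸ sum_sub_card_le_sum_natFloor _ _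
  · calc _ ≤ D / β := hfloor_sum ▸ sum_natFloor_le_sum fun j _ => by positivity
      _ < (c₂ + 2 * ε) * L / β :=
          upper_bound_of_density hβ hε hc₂ hc₂ε hn' hm' hLm_ge hD_up

end Partition

/-- degree bounds for the reduced multidigraph.  With
`d_{i,j} = e_{G'}(P i, P j)/m²`, the out- and indegrees `Σ_j ⌊d_{i,j}/β⌋` of each cluster
in the reduced multidigraph lie strictly between `(c₁ − 3d)L/β` and `(c₂ + 2ε)L/β`. -/
theorem reduced_multidigraph_degree_bounds :
    ∀ c₁ c₂ : ℝ, 0 < c₁ → c₁ ≤ c₂ → c₂ < 1 →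
    ∃ d₀ : ℝ, 0 < d₀ ∧
    ∀ d : ℝ, 0 < d → d ≤ d₀ →
    ∃ β₀ : ℝ, 0 < β₀ ∧
    ∀ β : ℝ, 0 < β → β ≤ β₀ →
    ∃ ε₀ : ℝ, 0 < ε₀ ∧
    ∀ ε : ℝ, 0 < ε → ε ≤ ε₀ →
    ∃ L₀ : ℕ, ∀ L : ℕ, L₀ ≤ L →
    ∃ n₀ : ℕ, ∀ n : ℕ, n₀ ≤ n →
    ∀ (V : Type) [Fintype V] [DecidableEq V], Fintype.card V = n →
    ∀ G G' : V → V → Prop,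
      (∀ v, c₁ * (n : ℝ) ≤ (outDeg G v : ℝ) ∧ c₁ * (n : ℝ) ≤ (inDeg G v : ℝ) ∧
            (outDeg G v : ℝ) ≤ c₂ * (n : ℝ) ∧ (inDeg G v : ℝ) ≤ c₂ * (n : ℝ)) →
    ∀ V₀ : Finset V, ∀ P : Fin L → Finset V, ∀ m : ℕ,
      (∀ i, Disjoint V₀ (P i)) →
      (∀ i j, i ≠ j → Disjoint (P i) (P j)) →
      (∀ v : V, v ∈ V₀ ∨ ∃ i, v ∈ P i) →
      ((V₀.card : ℝ) ≤ ε * (n : ℝ)) →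
      (∀ i, (P i).card = m) →
      (∀ a b : V, G' a b → G a b) →
      (∀ x : V, (outDeg G x : ℝ) - (d + ε) * (n : ℝ) < (outDeg G' x : ℝ) ∧
                (inDeg G x : ℝ) - (d + ε) * (n : ℝ) < (inDeg G' x : ℝ)) →
      (∀ i, ∀ x ∈ P i, ∀ y ∈ P i, ¬ G' x y) →
      ∀ i : Fin L,
        ((c₁ - 3*d) * (L : ℝ) / β <
            ((∑ j ∈ Finset.univ.erase i, ⌊(eDir G' (P i) (P j) : ℝ) / ((m : ℝ)^2) / β⌋₊ : ℕ) : ℝ) ∧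
          ((∑ j ∈ Finset.univ.erase i, ⌊(eDir G' (P i) (P j) : ℝ) / ((m : ℝ)^2) / β⌋₊ : ℕ) : ℝ) <
            (c₂ + 2*ε) * (L : ℝ) / β) ∧
        ((c₁ - 3*d) * (L : ℝ) / β <
            ((∑ j ∈ Finset.univ.erase i, ⌊(eDir G' (P j) (P i) : ℝ) / ((m : ℝ)^2) / β⌋₊ : ℕ) : ℝ) ∧
          ((∑ j ∈ Finset.univ.erase i, ⌊(eDir G' (P j) (P i) : ℝ) / ((m : ℝ)^2) / β⌋₊ : ℕ) : ℝ) <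
            (c₂ + 2*ε) * (L : ℝ) / β) := by
  intro c₁ c₂ hc₁ hc₁₂ hc₂
  refine ⟨c₁ / 4, by positivity, fun d hd hd₀ => ⟨d, hd, fun β hβ hβd => ⟨d / 4, by positivity,
    fun ε hε hεd => ⟨0, fun L _ => ⟨1, fun n hn V _ _ hcard G G' hdeg V₀ P m hV₀ hP hcover
      hV₀card hm hsub hdeg' hno i => ?_⟩⟩⟩⟩⟩
  have hβ' : β < 2 * (d - ε) := by linarith
  have hc₁' : d + 2 * ε ≤ c₁ := by linarith
  have hc₂' : 0 ≤ c₂ := by linarith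
  have hc₂ε : c₂ + 2 * ε < 2 := by linarith
  refine ⟨reduced_outDeg_bounds hsub hβ hβ' hc₁' hε hc₂' hc₂ε hn
    (fun v => ⟨(hdeg v).1, (hdeg v).2.2.1⟩) (fun x => (hdeg' x).1) hV₀ hP hcover hV₀card hm hcard
    i (hno i), ?_⟩
  simpa only [eDir_flip] using reduced_outDeg_bounds (G := flip G) (H := flip G')
    (fun a b h => hsub b a h) hβ hβ' hc₁' hε hc₂' hc₂ε hn (fun v => ⟨(hdeg v).2.1, (hdeg v).2.2.2⟩)
    (fun x => (hdeg' x).2) hV₀ hP hcover hV₀card hm hcard i fun x hx y hy => hno i y hy x hx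
end
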